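/- arXiv:2311.14251 — 3 statements merged into one kernel-verified Lean document; each statement's English description precedes it below -/
import Mathlib

section
/- Let Q_0 and Q_1 be probability distributions on a finite alphabet having a common support point, and let p_min be the smallest nonzero value among the probabilities Q_0(x) and Q_1(x). Then for all s ∈ (0,1): |d_C'(Q_0, Q_1, s)| ≤ log(1/p_min), and 0 ≤ −d_C''(Q_0, Q_1, s) ≤ (log(1/p_min))^2. -/
open scoped BigOperators
open Finset

noncomputable section

/-- A probability mass function on a finite type, given as a real-valued function. -/
def IsPMF {α : Type*} [Fintype α] (p : α → ℝ) : Prop :=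
  (∀ x, 0 ≤ p x) ∧ ∑ x, p x = 1

/-- A discrete memoryless channel: every input symbol yields a PMF on outputs. -/
def IsChannel {X Y : Type*} [Fintype Y] (P : X → Y → ℝ) : Prop :=
  ∀ x, IsPMF (P x)

/-- The Chernoff sum `Σ_x p(x)^{1-s} q(x)^s`, with terms where `p` or `q` vanish removed;
this realizes the continuous extension to the endpoints `s ∈ {0,1}`. -/
def cherSum {α : Type*} [Fintype α] (p q : α → ℝ) (s : ℝ) : ℝ :=
  ∑ x, if p x = 0 ∨ q x = 0 then 0 else p x ^ (1 - s) * q x ^ s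

/-- The Chernoff divergence `d_C(p, q, s)`. -/
def dC {α : Type*} [Fintype α] (p q : α → ℝ) (s : ℝ) : ℝ :=
  - Real.log (cherSum p q s)

/-- First derivative of the Chernoff divergence with respect to `s`. -/
def dC' {α : Type*} [Fintype α] (p q : α → ℝ) (s : ℝ) : ℝ :=
  deriv (dC p q) s

/-- Second derivative of the Chernoff divergence with respect to `s`. -/
def dC'' {α : Type*} [Fintype α] (p q : α → ℝ) (s : ℝ) : ℝ :=
  deriv (deriv (dC p q)) s

/-- The tilted distribution `Q_s`. -/
def tilted {α : Type*} [Fintype α] (p q : α → ℝ) (s : ℝ) (x : α) : ℝ :=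
  (if p x = 0 ∨ q x = 0 then 0 else p x ^ (1 - s) * q x ^ s) / cherSum p q s

/-- Kullback–Leibler divergence (natural log), with the convention `0 log 0 = 0`. -/
def KLdiv {α : Type*} [Fintype α] (p q : α → ℝ) : ℝ :=
  ∑ x, if p x = 0 then 0 else p x * Real.log (p x / q x)

/-- Product (memoryless) output distribution of a channel given an input string. -/
def prodDist {X Y : Type*} [Fintype Y] {n : ℕ} (P : X → Y → ℝ) (w : Fin n → X) :
    (Fin n → Y) → ℝ :=
  fun y => ∏ i, P (w i) (y i)

/-- Two distributions have a common support point. -/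
def CommonSupport {α : Type*} (p q : α → ℝ) : Prop :=
  ∃ x, p x ≠ 0 ∧ q x ≠ 0

/-- `pmin` is the smallest nonzero transition probability of the channel `Q`. -/
def MinTransChan {X Y : Type*} (Q : X → Y → ℝ) (pmin : ℝ) : Prop :=
  0 < pmin ∧ (∃ x y, Q x y = pmin) ∧ ∀ x y, Q x y ≠ 0 → pmin ≤ Q x y

/-- `pmin` is the smallest nonzero transition probability among the channels `P` and `Q`. -/
def MinTransPair {Y Z : Type*} (P : Bool → Y → ℝ) (Q : Bool → Z → ℝ) (pmin : ℝ) : Prop :=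
  0 < pmin ∧ ((∃ b y, P b y = pmin) ∨ (∃ b z, Q b z = pmin)) ∧
    (∀ b y, P b y ≠ 0 → pmin ≤ P b y) ∧ ∀ b z, Q b z ≠ 0 → pmin ≤ Q b z

/-- `pmin` is the smallest nonzero probability among the values of two distributions. -/
def MinProbPair {α : Type*} (p q : α → ℝ) (pmin : ℝ) : Prop :=
  0 < pmin ∧ ((∃ x, p x = pmin) ∨ (∃ x, q x = pmin)) ∧
    (∀ x, p x ≠ 0 → pmin ≤ p x) ∧ ∀ x, q x ≠ 0 → pmin ≤ q x

/-- A deterministic `n`-step 2-hop protocol: codewords `x false = x⃗₀`, `x true = x⃗₁`,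
relay maps (the `i`-th transmission may depend only on the previously received symbols),
and a decoder. -/
structure DetProtocol (Y Z : Type*) (n : ℕ) where
  x : Bool → Fin n → Bool
  relay : (i : Fin n) → (Fin i → Y) → Bool
  dec : (Fin n → Z) → Bool

/-- The relay transmissions `W_1, …, W_n` determined by the received sequence `y`. -/
def DetProtocol.W {Y Z : Type*} {n : ℕ} (π : DetProtocol Y Z n) (y : Fin n → Y)
    (i : Fin n) : Bool :=
  π.relay i (fun j => y (Fin.castLE i.isLt.le j))

/-- `errProb P Q π b` is the conditional error probability `ℙ(Θ̂ = ¬b ∣ Θ = b)`. -/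
def errProb {Y Z : Type*} [Fintype Y] [Fintype Z] {n : ℕ}
    (P : Bool → Y → ℝ) (Q : Bool → Z → ℝ) (π : DetProtocol Y Z n) (b : Bool) : ℝ :=
  ∑ y : Fin n → Y, ∑ z : Fin n → Z,
    prodDist P (π.x b) y * prodDist Q (π.W y) z *
      (if π.dec z = !b then 1 else 0)

/-- Probability (given `Θ = b`) that the relay receives the prefix `ypre` in the
first `k` time steps. -/
def prefixProb {Y Z : Type*} [Fintype Y] {n : ℕ} (P : Bool → Y → ℝ)
    (π : DetProtocol Y Z n) (b : Bool) {k : ℕ} (hk : k ≤ n) (ypre : Fin k → Y) : ℝ :=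
  ∏ i : Fin k, P (π.x b (Fin.castLE hk i)) (ypre i)

/-- `errGiven P Q π b hk ypre` is the conditional error probability `p_{e,b}(y_{1…k})`:
the probability that `Θ̂ = ¬b` given `Θ = b` and that the relay receives `ypre` in the
first `k` time steps. -/
def errGiven {Y Z : Type*} [Fintype Y] [Fintype Z] {n : ℕ}
    (P : Bool → Y → ℝ) (Q : Bool → Z → ℝ) (π : DetProtocol Y Z n) (b : Bool)
    {k : ℕ} (hk : k ≤ n) (ypre : Fin k → Y) : ℝ :=
  (∑ y : Fin n → Y, ∑ z : Fin n → Z,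
      Set.indicator {y' : Fin n → Y | ∀ i : Fin k, y' (Fin.castLE hk i) = ypre i}
          (fun _ => (1 : ℝ)) y *
        prodDist P (π.x b) y * prodDist Q (π.W y) z *
        (if π.dec z = !b then 1 else 0)) /
    prefixProb P π b hk ypre

/-- The first `k` relay transmissions `w⃗(y_{1…k})`, determined by the first `k`
received symbols. -/
def relayPrefix {Y Z : Type*} {n : ℕ} (π : DetProtocol Y Z n) {k : ℕ} (hk : k ≤ n)
    (ypre : Fin k → Y) (i : Fin k) : Bool :=
  π.relay (Fin.castLE hk i) (fun j => ypre (Fin.castLE i.isLt.le j))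

/-- Probability that the decoder outputs `b` when the relay input string is `w`. -/
def decProb {Z : Type*} [Fintype Z] {n : ℕ} (Q : Bool → Z → ℝ)
    (dec : (Fin n → Z) → Bool) (b : Bool) (w : Fin n → Bool) : ℝ :=
  ∑ z : Fin n → Z, prodDist Q w z * (if dec z = b then 1 else 0)

/-- `w` extends the relay's first `k` transmissions (after receiving `ypre`) to length `n`,
minimizing the probability that the decoder outputs `b`, i.e. `w = w⃗_{1-b}(y_{1…k})`. -/
def IsBestExtension {Y Z : Type*} [Fintype Z] {n : ℕ} (Q : Bool → Z → ℝ)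
    (π : DetProtocol Y Z n) (b : Bool) {k : ℕ} (hk : k ≤ n) (ypre : Fin k → Y)
    (w : Fin n → Bool) : Prop :=
  (∀ i : Fin k, w (Fin.castLE hk i) = relayPrefix π hk ypre i) ∧
    ∀ w' : Fin n → Bool,
      (∀ i : Fin k, w' (Fin.castLE hk i) = relayPrefix π hk ypre i) →
        decProb Q π.dec b w ≤ decProb Q π.dec b w'

/-- A randomized `n`-step 2-hop protocol: a finite collection of deterministic
protocols together with a probability distribution (the shared private randomness). -/
structure RandProtocol (Y Z : Type*) (n : ℕ) where
  m : ℕ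
  ρ : Fin m → ℝ
  det : Fin m → DetProtocol Y Z n

/-- Validity of the randomness distribution of a randomized protocol. -/
def RandProtocol.Valid {Y Z : Type*} {n : ℕ} (π : RandProtocol Y Z n) : Prop :=
  (∀ r, 0 ≤ π.ρ r) ∧ ∑ r, π.ρ r = 1

/-- Overall error probability `ℙ(Θ̂ ≠ Θ)` of a randomized protocol, with `Θ` uniform. -/
def randPe {Y Z : Type*} [Fintype Y] [Fintype Z] {n : ℕ}
    (P : Bool → Y → ℝ) (Q : Bool → Z → ℝ) (π : RandProtocol Y Z n) : ℝ :=
  ∑ r, π.ρ r * ((errProb P Q (π.det r) false + errProb P Q (π.det r) true) / 2)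

/-- The 2-hop error exponent `E(P,Q)`: the supremum, over sequences of (randomized)
protocols, of the liminf of `-(1/n) log P_e(n,P,Q)`. -/
def twoHopExponent {Y Z : Type*} [Fintype Y] [Fintype Z]
    (P : Bool → Y → ℝ) (Q : Bool → Z → ℝ) : ℝ :=
  sSup { E | ∃ π : (n : ℕ) → RandProtocol Y Z n, (∀ n, (π n).Valid) ∧
    E = Filter.liminf (fun n : ℕ => -(1 / (n : ℝ)) * Real.log (randPe P Q (π n)))
          Filter.atTop }

/-- `m` is the unique global maximizer of `g` on `[0,1]`. -/
def UniqueArgmax (g : ℝ → ℝ) (m : ℝ) : Prop :=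
  m ∈ Set.Icc (0 : ℝ) 1 ∧ ∀ s ∈ Set.Icc (0 : ℝ) 1, s ≠ m → g s < g m

/-- `g` is skewed with respect to `s*`. -/
def SkewedFun (sStar : ℝ) (g : ℝ → ℝ) : Prop :=
  ∃ m, UniqueArgmax g m ∧ (m < sStar ∨ 1 - sStar < m)

/-- `g` is balanced with respect to `s*`. -/
def BalancedFun (sStar : ℝ) (g : ℝ → ℝ) : Prop :=
  ∃ m, UniqueArgmax g m ∧ sStar < m ∧ m < 1 - sStar

/-- `g` is neutral with respect to `s*`. -/
def NeutralFun (sStar : ℝ) (g : ℝ → ℝ) : Prop :=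
  ∃ m, UniqueArgmax g m ∧ (m = sStar ∨ m = 1 - sStar)

/-- `g` and `h` are of strictly opposite type w.r.t. `s*`. -/
def StrictlyOppositeType (sStar : ℝ) (g h : ℝ → ℝ) : Prop :=
  (SkewedFun sStar g ∧ BalancedFun sStar h) ∨ (BalancedFun sStar g ∧ SkewedFun sStar h)

/-- `g` and `h` are of weakly opposite type w.r.t. `s*`. -/
def WeaklyOppositeType (sStar : ℝ) (g h : ℝ → ℝ) : Prop :=
  ((SkewedFun sStar g ∨ NeutralFun sStar g) ∧ (BalancedFun sStar h ∨ NeutralFun sStar h)) ∨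
    ((BalancedFun sStar g ∨ NeutralFun sStar g) ∧ (SkewedFun sStar h ∨ NeutralFun sStar h))

/-- `g` is non-constant on `[0,1]`. -/
def NonConstantOn (g : ℝ → ℝ) : Prop :=
  ∃ s₁ ∈ Set.Icc (0 : ℝ) 1, ∃ s₂ ∈ Set.Icc (0 : ℝ) 1, g s₁ ≠ g s₂

/-- The quantity `E_s` from the paper. -/
def Efun {Y Z : Type*} [Fintype Y] [Fintype Z]
    (P : Bool → Y → ℝ) (Q : Bool → Z → ℝ) (s : ℝ) : ℝ :=
  min (max (dC (P false) (P true) s) (dC (P false) (P true) (1 - s)))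
      (max (dC (Q false) (Q true) s) (dC (Q false) (Q true) (1 - s)))

/-! On the common support `p ^ (1 - s) * q ^ s = p * exp (s * log (q / p))`, so `cherSum p q` is
the moment generating function of the log-likelihood ratio `log (q / p)` under `p` restricted to
the common support, and `-dC p q` is its cumulant generating function. Hence `-dC'` and `-dC''` at
`s` are the mean and the variance of the log-likelihood ratio under the exponentially tilted
probability measure, and both are controlled by `|log (q / p)| ≤ log (1 / pmin)`. -/

open MeasureTheory ProbabilityTheory

def logRatio {α : Type*} (p q : α → ℝ) (x : α) : ℝ :=
  Real.log (q x) - Real.log (p x)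

lemma IsPMF.le_one {α : Type*} [Fintype α] {p : α → ℝ} (hp : IsPMF p) (x : α) : p x ≤ 1 :=
  hp.2 ▸ single_le_sum (fun y _ => hp.1 y) (mem_univ x)

lemma MinProbPair.le_one {α : Type*} [Fintype α] {p q : α → ℝ} {pmin : ℝ} (hp : IsPMF p)
    (hq : IsPMF q) (h : MinProbPair p q pmin) : pmin ≤ 1 := by
  obtain ⟨x, rfl⟩ | ⟨x, rfl⟩ := h.2.1
  · exact hp.le_one x
  · exact hq.le_one x

-- The case `a = 0` holds through the junk value `Real.log 0 = 0`; it makes `logRatio` bounded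
-- everywhere, not only on the common support.
lemma log_mem_Icc_log_of_le_one {m a : ℝ} (hm : 0 < m) (hm1 : m ≤ 1) (ha1 : a ≤ 1)
    (hma : a ≠ 0 → m ≤ a) : Real.log a ∈ Set.Icc (Real.log m) 0 := by
  rcases eq_or_ne a 0 with rfl | ha
  · simpa using Real.log_nonpos hm.le hm1
  · have hma := hma ha
    exact ⟨Real.log_le_log hm hma, Real.log_nonpos (hm.le.trans hma) ha1⟩

lemma abs_logRatio_le {α : Type*} [Fintype α] {p q : α → ℝ} {pmin : ℝ} (hp : IsPMF p)
    (hq : IsPMF q) (h : MinProbPair p q pmin) (x : α) :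
    |logRatio p q x| ≤ Real.log (1 / pmin) := by
  have hm1 := h.le_one hp hq
  obtain ⟨hlp, hp0⟩ := log_mem_Icc_log_of_le_one h.1 hm1 (hp.le_one x) (h.2.2.1 x)
  obtain ⟨hlq, hq0⟩ := log_mem_Icc_log_of_le_one h.1 hm1 (hq.le_one x) (h.2.2.2 x)
  rw [logRatio, one_div, Real.log_inv, abs_le]
  constructor <;> linarith

lemma rpow_one_sub_mul_rpow_eq_mul_exp {a b : ℝ} (ha : 0 < a) (hb : 0 < b) (s : ℝ) :
    a ^ (1 - s) * b ^ s = a * Real.exp (s * (Real.log b - Real.log a)) := by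
  rw [Real.rpow_def_of_pos ha, Real.rpow_def_of_pos hb, ← Real.exp_add, ← Real.exp_log ha,
    ← Real.exp_add, Real.log_exp]
  ring_nf

def commonSupportWeight {α : Type*} (p q : α → ℝ) (x : α) : ℝ :=
  if p x = 0 ∨ q x = 0 then 0 else p x

lemma commonSupportWeight_nonneg {α : Type*} {p : α → ℝ} (hp : ∀ x, 0 ≤ p x) (q : α → ℝ)
    (x : α) : 0 ≤ commonSupportWeight p q x := by
  unfold commonSupportWeight
  split_ifs
  exacts [le_rfl, hp x]

section CommonSupportMeasure

variable {α : Type*} [Fintype α] [MeasurableSpace α] [MeasurableSingletonClass α]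

def commonSupportMeasure (p q : α → ℝ) : Measure α :=
  ∑ x, ENNReal.ofReal (commonSupportWeight p q x) • Measure.dirac x

instance (p q : α → ℝ) : IsFiniteMeasure (commonSupportMeasure p q) :=
  ⟨by simp [commonSupportMeasure, ENNReal.sum_lt_top]⟩

lemma commonSupportMeasure_real_singleton {p : α → ℝ} (hp : ∀ x, 0 ≤ p x) (q : α → ℝ) (x : α) :
    (commonSupportMeasure p q).real {x} = commonSupportWeight p q x := by
  classical
  simp [measureReal_def, commonSupportMeasure, Set.indicator_apply,
    commonSupportWeight_nonneg hp]

lemma integral_commonSupportMeasure {p : α → ℝ} (hp : ∀ x, 0 ≤ p x) (q f : α → ℝ) :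
    ∫ x, f x ∂commonSupportMeasure p q = ∑ x, commonSupportWeight p q x * f x := by
  simp [integral_fintype Integrable.of_finite, commonSupportMeasure_real_singleton hp]

lemma commonSupportMeasure_ne_zero {p q : α → ℝ} (hp : ∀ x, 0 ≤ p x) (h : CommonSupport p q) :
    commonSupportMeasure p q ≠ 0 := by
  obtain ⟨x, hpx, hqx⟩ := h
  intro hμ
  have := commonSupportMeasure_real_singleton hp q x
  simp [hμ, commonSupportWeight, hpx, hqx] at this
  exact hpx this.symm

lemma cherSum_eq_mgf {p q : α → ℝ} (hp : ∀ x, 0 ≤ p x) (hq : ∀ x, 0 ≤ q x) (s : ℝ) :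
    cherSum p q s = mgf (logRatio p q) (commonSupportMeasure p q) s := by
  rw [mgf, integral_commonSupportMeasure hp]
  refine Finset.sum_congr rfl fun x _ => ?_
  unfold commonSupportWeight
  split_ifs with h
  · rw [zero_mul]
  · push Not at h
    exact rpow_one_sub_mul_rpow_eq_mul_exp ((hp x).lt_of_ne' h.1) ((hq x).lt_of_ne' h.2) s

lemma dC_eq_neg_cgf {p q : α → ℝ} (hp : ∀ x, 0 ≤ p x) (hq : ∀ x, 0 ≤ q x) :
    dC p q = -cgf (logRatio p q) (commonSupportMeasure p q) := by
  ext s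
  rw [dC, cherSum_eq_mgf hp hq, Pi.neg_apply, cgf]

lemma interior_integrableExpSet_commonSupportMeasure (p q X : α → ℝ) :
    interior (integrableExpSet X (commonSupportMeasure p q)) = Set.univ := by
  simp [integrableExpSet, Integrable.of_finite]

lemma dC'_eq_neg_integral_tilted {p q : α → ℝ} (hp : ∀ x, 0 ≤ p x) (hq : ∀ x, 0 ≤ q x) (s : ℝ) :
    dC' p q s = -((commonSupportMeasure p q).tilted (s * logRatio p q ·))[logRatio p q] := by
  rw [dC', dC_eq_neg_cgf hp hq, deriv.neg, integral_tilted_mul_self]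
  simp [interior_integrableExpSet_commonSupportMeasure]

lemma dC''_eq_neg_variance_tilted {p q : α → ℝ} (hp : ∀ x, 0 ≤ p x) (hq : ∀ x, 0 ≤ q x) (s : ℝ) :
    dC'' p q s = -Var[logRatio p q; (commonSupportMeasure p q).tilted (s * logRatio p q ·)] := by
  rw [dC'', dC_eq_neg_cgf hp hq, variance_tilted_mul, iteratedDeriv_succ, iteratedDeriv_one,
    deriv.neg', deriv.fun_neg]
  simp [interior_integrableExpSet_commonSupportMeasure]

end CommonSupportMeasure

lemma abs_integral_le_of_abs_le {Ω : Type*} [MeasurableSpace Ω] {μ : Measure Ω}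
    [IsProbabilityMeasure μ] {X : Ω → ℝ} {L : ℝ} (hX : ∀ ω, |X ω| ≤ L) : |μ[X]| ≤ L := by
  have hX' : ∀ᵐ ω ∂μ, ‖X ω‖ ≤ L := ae_of_all _ hX
  simpa using norm_integral_le_of_norm_le_const hX'

lemma variance_le_sq_of_abs_le {Ω : Type*} [MeasurableSpace Ω] {μ : Measure Ω}
    [IsProbabilityMeasure μ] {X : Ω → ℝ} {L : ℝ} (hX : ∀ ω, |X ω| ≤ L)
    (hXm : AEMeasurable X μ) : Var[X; μ] ≤ L ^ 2 := by
  have := variance_le_sq_of_bounded (ae_of_all μ fun ω => abs_le.mp (hX ω)) hXm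
  rwa [sub_neg_eq_add, ← two_mul, mul_div_cancel_left₀ _ two_ne_zero] at this

theorem dC_deriv_bounds_general {α : Type*} [Fintype α]
    (Q0 Q1 : α → ℝ) (h0 : IsPMF Q0) (h1 : IsPMF Q1)
    (hsupp : CommonSupport Q0 Q1)
    (pmin : ℝ) (hpmin : MinProbPair Q0 Q1 pmin)
    (s : ℝ) :
    |dC' Q0 Q1 s| ≤ Real.log (1 / pmin) ∧
      0 ≤ - dC'' Q0 Q1 s ∧ - dC'' Q0 Q1 s ≤ (Real.log (1 / pmin)) ^ 2 := by
  let _ : MeasurableSpace α := ⊤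
  have : NeZero (commonSupportMeasure Q0 Q1) := ⟨commonSupportMeasure_ne_zero h0.1 hsupp⟩
  have : IsProbabilityMeasure ((commonSupportMeasure Q0 Q1).tilted (s * logRatio Q0 Q1 ·)) :=
    isProbabilityMeasure_tilted Integrable.of_finite
  have hbound := abs_logRatio_le h0 h1 hpmin
  rw [dC'_eq_neg_integral_tilted h0.1 h1.1, dC''_eq_neg_variance_tilted h0.1 h1.1, abs_neg,
    neg_neg]
  exact ⟨abs_integral_le_of_abs_le hbound, variance_nonneg _ _,
    variance_le_sq_of_abs_le hbound Measurable.of_discrete.aemeasurable⟩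

/-- Lemma 4 of the paper: bounds on the first and second derivatives
of the Chernoff divergence in terms of the smallest nonzero probability. -/
theorem dC_deriv_bounds {α : Type*} [Fintype α]
    (Q0 Q1 : α → ℝ) (h0 : IsPMF Q0) (h1 : IsPMF Q1)
    (hsupp : CommonSupport Q0 Q1)
    (pmin : ℝ) (hpmin : MinProbPair Q0 Q1 pmin)
    (s : ℝ) (hs : s ∈ Set.Ioo (0 : ℝ) 1) :
    |dC' Q0 Q1 s| ≤ Real.log (1 / pmin) ∧
      0 ≤ - dC'' Q0 Q1 s ∧ - dC'' Q0 Q1 s ≤ (Real.log (1 / pmin)) ^ 2 :=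
  dC_deriv_bounds_general Q0 Q1 h0 h1 hsupp pmin hpmin s

end
end

section
/- Let Q be a binary-input DMC with finite output alphabet whose conditional output distributions Q_0, Q_1 have a common support point, let p_min be its smallest nonzero transition probability, let w⃗_0, w⃗_1 ∈ {0,1}^n, and let D_0, D_1 be a partition of the n-fold output alphabet with p_{e,0} = Q^n(D_1 | w⃗_0) and p_{e,1} = Q^n(D_0 | w⃗_1). Let n_{01} be the number of positions i with w⃗_0^{(i)} = 0 and w⃗_1^{(i)} = 1, and n_{10} the number of positions i with w⃗_0^{(i)} = 1 and w⃗_1^{(i)} = 0. Then for any s ∈ (0,1), at least one of the following holds: (a) −log p_{e,0} ≤ n_{01}·D(Q_s‖Q_0) + n_{10}·D(Q_{1−s}‖Q_1) + √(2n)·log(1/p_min) + log 4; (b) −log p_{e,1} ≤ n_{01}·D(Q_s‖Q_1) + n_{10}·D(Q_{1−s}‖Q_0) + √(2n)·log(1/p_min) + log 4. -/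
open scoped BigOperators
open Finset

noncomputable section

/-! Change of measure. Let `R` be the product of the tilted rows `tilted (Q w₀ⁱ) (Q w₁ⁱ) s`,
i.e. `Q_s` where `(w₀ⁱ, w₁ⁱ) = (0, 1)`, `Q_{1-s}` where it is `(1, 0)`, and `Q_{w₀ⁱ}` elsewhere.
Under `R` the log-likelihood ratio `log (R / Q^n(· | w⃗_b))` is a sum of independent terms
whose mean is the divergence term of (a) resp. (b), and each term has variance at most
`s² log² (1/pmin)` resp. `(1-s)² log² (1/pmin)`. By Chebyshev, with `λ = √(2n) log (1/pmin)`
the ratio exceeds its mean by `λ` with `R`-probability at most `s²/2` resp. `(1-s)²/2`, so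
`D₁` or `D₀` carries `R`-mass at least `1/4` on which the ratio is below mean `+ λ`; there
`Q^n(· | w⃗_b) ≥ e^{-(mean + λ)} R`. -/

open Real

section ProductDistribution

variable {ι Z : Type*} [Fintype ι] [DecidableEq ι] [Fintype Z] (r : ι → Z → ℝ)

theorem sum_prod_mul_prod (φ : ι → Z → ℝ) :
    ∑ z : ι → Z, (∏ i, r i (z i)) * ∏ i, φ i (z i) = ∏ i, ∑ x, r i x * φ i x := by
  simp_rw [← prod_mul_distrib]
  exact (Fintype.prod_sum fun i x => r i x * φ i x).symm

variable {r}

theorem sum_prod_eq_one (hr : ∀ i, ∑ x, r i x = 1) :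
    ∑ z : ι → Z, ∏ i, r i (z i) = 1 := by
  simpa [hr] using sum_prod_mul_prod r (fun _ _ => 1)

theorem sum_prod_mul_apply (hr : ∀ i, ∑ x, r i x = 1) (i : ι) (f : Z → ℝ) :
    ∑ z : ι → Z, (∏ k, r k (z k)) * f (z i) = ∑ x, r i x * f x := by
  have h := sum_prod_mul_prod r (fun k x => if k = i then f x else 1)
  simp only [prod_ite_eq', mem_univ, if_true] at h
  rw [h, prod_eq_single i (fun k _ hk => by simp [hk, hr]) (by simp)]
  simp

theorem sum_prod_mul_apply_mul_apply_eq_zero {i j : ι} (hij : i ≠ j) (f g : Z → ℝ)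
    (hf : ∑ x, r i x * f x = 0) :
    ∑ z : ι → Z, (∏ k, r k (z k)) * (f (z i) * g (z j)) = 0 := by
  have h := sum_prod_mul_prod r
    (fun k x => (if k = i then f x else 1) * (if k = j then g x else 1))
  simp only [prod_mul_distrib, prod_ite_eq', mem_univ, if_true] at h
  rw [h]
  exact prod_eq_zero (mem_univ i) (by simpa [hij] using hf)

theorem sum_prod_mul_sq_sum (hr : ∀ i, ∑ x, r i x = 1) (g : ι → Z → ℝ)
    (hg : ∀ i, ∑ x, r i x * g i x = 0) :
    ∑ z : ι → Z, (∏ k, r k (z k)) * (∑ i, g i (z i)) ^ 2 = ∑ i, ∑ x, r i x * g i x ^ 2 := by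
  simp_rw [sq, sum_mul_sum, mul_sum]
  rw [sum_comm]
  refine sum_congr rfl fun i _ => ?_
  rw [sum_comm, sum_eq_single i
    (fun j _ hji => sum_prod_mul_apply_mul_apply_eq_zero (Ne.symm hji) _ _ (hg i))
    (by simp)]
  exact sum_prod_mul_apply hr i fun x => g i x * g i x

/-- Chebyshev's inequality for a sum of independent centred coordinates. -/
theorem sum_prod_filter_le_sum_sq_div (hr0 : ∀ i x, 0 ≤ r i x) (hr : ∀ i, ∑ x, r i x = 1)
    (g : ι → Z → ℝ) (hg : ∀ i, ∑ x, r i x * g i x = 0) {lam : ℝ} (hlam : 0 < lam) :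
    ∑ z ∈ univ.filter (fun z : ι → Z => lam ≤ ∑ i, g i (z i)), ∏ k, r k (z k)
      ≤ (∑ i, ∑ x, r i x * g i x ^ 2) / lam ^ 2 := by
  have hR : ∀ z : ι → Z, 0 ≤ ∏ k, r k (z k) := fun z => prod_nonneg fun k _ => hr0 k (z k)
  rw [← sum_prod_mul_sq_sum hr g hg, sum_div]
  calc ∑ z ∈ univ.filter (fun z : ι → Z => lam ≤ ∑ i, g i (z i)), ∏ k, r k (z k)
      ≤ ∑ z ∈ univ.filter (fun z : ι → Z => lam ≤ ∑ i, g i (z i)),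
          (∏ k, r k (z k)) * (∑ i, g i (z i)) ^ 2 / lam ^ 2 := by
        refine sum_le_sum fun z hz => ?_
        have hz : lam ≤ ∑ i, g i (z i) := (mem_filter.1 hz).2
        rw [mul_div_assoc]
        refine le_mul_of_one_le_right (hR z) ?_
        rw [one_le_div (by positivity)]
        exact pow_le_pow_left₀ hlam.le hz 2
    _ ≤ _ := sum_le_sum_of_subset_of_nonneg (filter_subset _ _) fun z _ _ => by
        have := hR z; positivity

end ProductDistribution

section Tilted

variable {α : Type*} [Fintype α]

/-- The relative entropy variance: the variance of `log (r / q)` under `r`. -/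
def KLvar (r q : α → ℝ) : ℝ :=
  ∑ x, r x * (log (r x / q x) - KLdiv r q) ^ 2

theorem KLdiv_eq_sum (r q : α → ℝ) : KLdiv r q = ∑ x, r x * log (r x / q x) :=
  sum_congr rfl fun x _ => by by_cases hx : r x = 0 <;> simp [hx]

theorem KLdiv_self (p : α → ℝ) : KLdiv p p = 0 :=
  sum_eq_zero fun x _ => by by_cases hx : p x = 0 <;> simp [hx]

theorem sum_mul_sq_sub_mean_le {r : α → ℝ} (hr : ∑ x, r x = 1) (ℓ : α → ℝ) (a : ℝ) :
    ∑ x, r x * (ℓ x - ∑ y, r y * ℓ y) ^ 2 ≤ ∑ x, r x * (ℓ x - a) ^ 2 := by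
  set m := ∑ y, r y * ℓ y
  have hmean : ∑ x, r x * (ℓ x - a) = m - a := by
    simp only [mul_sub, sum_sub_distrib, ← sum_mul, hr, one_mul, m]
  have hsplit : ∑ x, r x * (ℓ x - m) ^ 2
      = ∑ x, r x * (ℓ x - a) ^ 2 - 2 * (m - a) * ∑ x, r x * (ℓ x - a) + (m - a) ^ 2 := by
    rw [mul_sum, ← sum_sub_distrib, ← one_mul ((m - a) ^ 2), ← hr, sum_mul, ← sum_add_distrib]
    exact sum_congr rfl fun x _ => by ring
  rw [hsplit, hmean]
  nlinarith [sq_nonneg (m - a)]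

theorem cherSum_pos {p q : α → ℝ} (hp : ∀ x, 0 ≤ p x) (hq : ∀ x, 0 ≤ q x)
    (hpq : CommonSupport p q) (t : ℝ) : 0 < cherSum p q t := by
  obtain ⟨x₀, hp₀, hq₀⟩ := hpq
  refine sum_pos' (fun x _ => ?_) ⟨x₀, mem_univ x₀, ?_⟩
  · split_ifs
    · exact le_rfl
    · exact mul_nonneg (rpow_nonneg (hp x) _) (rpow_nonneg (hq x) _)
  · rw [if_neg (by tauto)]
    exact mul_pos (rpow_pos_of_pos ((hp x₀).lt_of_ne' hp₀) _)
      (rpow_pos_of_pos ((hq x₀).lt_of_ne' hq₀) _)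

theorem isPMF_tilted {p q : α → ℝ} (hp : ∀ x, 0 ≤ p x) (hq : ∀ x, 0 ≤ q x)
    (hpq : CommonSupport p q) (t : ℝ) : IsPMF (tilted p q t) := by
  have hC := cherSum_pos hp hq hpq t
  refine ⟨fun x => div_nonneg ?_ hC.le, ?_⟩
  · split_ifs
    · exact le_rfl
    · exact mul_nonneg (rpow_nonneg (hp x) _) (rpow_nonneg (hq x) _)
  · simp only [tilted, ← sum_div]
    exact div_self hC.ne'

theorem tilted_eq_zero {p q : α → ℝ} {x : α} (h : p x = 0 ∨ q x = 0) (t : ℝ) :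
    tilted p q t x = 0 := by
  rw [tilted, if_pos h, zero_div]

theorem tilted_comm (p q : α → ℝ) (t : ℝ) : tilted p q t = tilted q p (1 - t) := by
  have hterm : ∀ x, (if p x = 0 ∨ q x = 0 then 0 else p x ^ (1 - t) * q x ^ t)
      = if q x = 0 ∨ p x = 0 then 0 else q x ^ (1 - (1 - t)) * p x ^ (1 - t) := fun x => by
    by_cases hp : p x = 0 <;> by_cases hq : q x = 0 <;> simp [hp, hq, mul_comm]
  funext x
  rw [tilted, tilted, cherSum, cherSum, hterm, sum_congr rfl fun y _ => hterm y]

theorem tilted_self {p : α → ℝ} (hp : IsPMF p) (t : ℝ) : tilted p p t = p := by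
  have hterm : ∀ x, (if p x = 0 ∨ p x = 0 then 0 else p x ^ (1 - t) * p x ^ t) = p x := by
    intro x
    split_ifs with hx
    · exact (or_self_iff.1 hx).symm
    · rw [← rpow_add ((hp.1 x).lt_of_ne' (by tauto)), sub_add_cancel, rpow_one]
  funext x
  rw [tilted, cherSum, hterm, sum_congr rfl fun y _ => hterm y, hp.2, div_one]

theorem log_tilted_div {p q : α → ℝ} {x : α} (hp : 0 < p x) (hq : 0 < q x) {t : ℝ}
    (hC : 0 < cherSum p q t) :
    log (tilted p q t x / p x) = t * (log (q x) - log (p x)) - log (cherSum p q t) := by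
  rw [tilted, if_neg (by simp [hp.ne', hq.ne']), div_div,
    log_div (by positivity) (by positivity), log_mul (by positivity) (by positivity),
    log_mul hC.ne' hp.ne', log_rpow hp, log_rpow hq]
  ring

theorem abs_log_sub_log_le {p q : α → ℝ} (hp : IsPMF p) (hq : IsPMF q) {pmin : ℝ}
    (hpmin : 0 < pmin) (hpm : ∀ x, p x ≠ 0 → pmin ≤ p x) (hqm : ∀ x, q x ≠ 0 → pmin ≤ q x)
    {x : α} (hpx : p x ≠ 0) (hqx : q x ≠ 0) :
    |log (q x) - log (p x)| ≤ log (1 / pmin) := by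
  have hp1 : p x ≤ 1 := hp.2 ▸ single_le_sum (fun y _ => hp.1 y) (mem_univ x)
  have hq1 : q x ≤ 1 := hq.2 ▸ single_le_sum (fun y _ => hq.1 y) (mem_univ x)
  have := log_le_log hpmin (hpm x hpx)
  have := log_le_log hpmin (hqm x hqx)
  have := log_nonpos (hp.1 x) hp1
  have := log_nonpos (hq.1 x) hq1
  rw [one_div, log_inv, abs_le]
  constructor <;> linarith

theorem KLvar_tilted_left_le {p q : α → ℝ} (hp : IsPMF p) (hq : IsPMF q)
    (hpq : CommonSupport p q) {pmin : ℝ} (hpmin : 0 < pmin)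
    (hpm : ∀ x, p x ≠ 0 → pmin ≤ p x) (hqm : ∀ x, q x ≠ 0 → pmin ≤ q x) (t : ℝ) :
    KLvar (tilted p q t) p ≤ t ^ 2 * log (1 / pmin) ^ 2 := by
  have hC := cherSum_pos hp.1 hq.1 hpq t
  have hT := isPMF_tilted hp.1 hq.1 hpq t
  rw [KLvar, KLdiv_eq_sum]
  refine (sum_mul_sq_sub_mean_le hT.2 _ (-log (cherSum p q t))).trans ?_
  calc ∑ x, tilted p q t x * (log (tilted p q t x / p x) - -log (cherSum p q t)) ^ 2
      ≤ ∑ x, tilted p q t x * (t ^ 2 * log (1 / pmin) ^ 2) := sum_le_sum fun x _ => ?_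
    _ = t ^ 2 * log (1 / pmin) ^ 2 := by rw [← sum_mul, hT.2, one_mul]
  by_cases hpx : p x = 0
  · simp [tilted_eq_zero (.inl hpx)]
  by_cases hqx : q x = 0
  · simp [tilted_eq_zero (.inr hqx)]
  rw [log_tilted_div ((hp.1 x).lt_of_ne' hpx) ((hq.1 x).lt_of_ne' hqx) hC, sub_neg_eq_add,
    sub_add_cancel, mul_pow]
  refine mul_le_mul_of_nonneg_left (mul_le_mul_of_nonneg_left ?_ (sq_nonneg t)) (hT.1 x)
  have := abs_log_sub_log_le hp hq hpmin hpm hqm hpx hqx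
  exact sq_le_sq' (by linarith [(abs_le.1 this).1]) (abs_le.1 this).2

theorem KLvar_tilted_right_le {p q : α → ℝ} (hp : IsPMF p) (hq : IsPMF q)
    (hpq : CommonSupport p q) {pmin : ℝ} (hpmin : 0 < pmin)
    (hpm : ∀ x, p x ≠ 0 → pmin ≤ p x) (hqm : ∀ x, q x ≠ 0 → pmin ≤ q x) (t : ℝ) :
    KLvar (tilted p q t) q ≤ (1 - t) ^ 2 * log (1 / pmin) ^ 2 := by
  rw [tilted_comm]
  obtain ⟨x, hpx, hqx⟩ := hpq
  exact KLvar_tilted_left_le hq hp ⟨x, hqx, hpx⟩ hpmin hqm hpm (1 - t)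

end Tilted

theorem prod_le_exp_mul_prod_of_sum_log_div_le {ι : Type*} [Fintype ι] {a b : ι → ℝ}
    (ha : ∀ i, 0 ≤ a i) (hb : ∀ i, 0 ≤ b i) (hab : ∀ i, a i ≠ 0 → b i ≠ 0) {t : ℝ}
    (ht : ∑ i, log (a i / b i) ≤ t) : ∏ i, a i ≤ exp t * ∏ i, b i := by
  by_cases h0 : ∃ i, a i = 0
  · obtain ⟨i, hi⟩ := h0
    rw [prod_eq_zero (mem_univ i) hi]
    exact mul_nonneg (exp_pos t).le (prod_nonneg fun i _ => hb i)
  push Not at h0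
  have hprod : ∏ i, a i = exp (∑ i, log (a i / b i)) * ∏ i, b i := by
    rw [exp_sum, ← prod_mul_distrib]
    refine prod_congr rfl fun i _ => ?_
    rw [exp_log (div_pos ((ha i).lt_of_ne' (h0 i)) ((hb i).lt_of_ne' (hab i (h0 i)))),
      div_mul_cancel₀ _ (hab i (h0 i))]
  rw [hprod]
  gcongr
  exact prod_nonneg fun i _ => hb i

section ChangeOfMeasure

variable {ι Z : Type*} [Fintype ι] [Fintype Z]

/-- The log-likelihood ratio of `∏ i, r i` against `∏ i, q i`, centred at its mean under
`∏ i, r i`. -/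
def centredLLR (r q : ι → Z → ℝ) (z : ι → Z) : ℝ :=
  ∑ i, (log (r i (z i) / q i (z i)) - KLdiv (r i) (q i))

theorem neg_log_sum_le_of_quarter_le {r q : ι → Z → ℝ} (hr : ∀ i x, 0 ≤ r i x)
    (hq : ∀ i x, 0 ≤ q i x) (hrq : ∀ i x, r i x ≠ 0 → q i x ≠ 0) {lam : ℝ}
    {S D : Finset (ι → Z)} (hSD : S ⊆ D) (hS : ∀ z ∈ S, centredLLR r q z < lam)
    (hmass : 1 / 4 ≤ ∑ z ∈ S, ∏ i, r i (z i)) :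
    -log (∑ z ∈ D, ∏ i, q i (z i)) ≤ ∑ i, KLdiv (r i) (q i) + lam + log 4 := by
  set t := ∑ i, KLdiv (r i) (q i) + lam
  have hQ : ∀ z : ι → Z, 0 ≤ ∏ i, q i (z i) := fun z => prod_nonneg fun i _ => hq i (z i)
  have hchange : ∀ z ∈ S, ∏ i, r i (z i) ≤ exp t * ∏ i, q i (z i) := fun z hz =>
    prod_le_exp_mul_prod_of_sum_log_div_le (fun i => hr i (z i)) (fun i => hq i (z i))
      (fun i => hrq i (z i)) <| by
        have := hS z hz
        rw [centredLLR, sum_sub_distrib] at this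
        linarith
  have hlower : exp (-t) / 4 ≤ ∑ z ∈ D, ∏ i, q i (z i) :=
    calc exp (-t) / 4 ≤ exp (-t) * ∑ z ∈ S, ∏ i, r i (z i) := by
          rw [div_eq_mul_one_div]; exact mul_le_mul_of_nonneg_left hmass (exp_pos _).le
      _ ≤ exp (-t) * (exp t * ∑ z ∈ S, ∏ i, q i (z i)) := by
          refine mul_le_mul_of_nonneg_left ?_ (exp_pos _).le
          rw [mul_sum]
          exact sum_le_sum hchange
      _ = ∑ z ∈ S, ∏ i, q i (z i) := by
          rw [← mul_assoc, ← exp_add, neg_add_cancel, exp_zero, one_mul]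
      _ ≤ ∑ z ∈ D, ∏ i, q i (z i) := sum_le_sum_of_subset_of_nonneg hSD fun z _ _ => hQ z
  have := log_le_log (by positivity) hlower
  rw [log_div (exp_pos _).ne' (by norm_num), log_exp] at this
  linarith

variable [DecidableEq ι]

theorem sum_prod_filter_le_centredLLR_le {r : ι → Z → ℝ} (hr : ∀ i, IsPMF (r i))
    (q : ι → Z → ℝ) {κ : ℝ} (hκ : ∀ i, KLvar (r i) (q i) ≤ κ) {lam : ℝ} (hlam : 0 < lam) :
    ∑ z ∈ univ.filter (fun z => lam ≤ centredLLR r q z), ∏ i, r i (z i)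
      ≤ Fintype.card ι * κ / lam ^ 2 := by
  have hcentred : ∀ i, ∑ x, r i x * (log (r i x / q i x) - KLdiv (r i) (q i)) = 0 := by
    intro i
    rw [KLdiv_eq_sum]
    simp only [mul_sub, sum_sub_distrib, ← sum_mul, (hr i).2, one_mul, sub_self]
  unfold centredLLR
  refine (sum_prod_filter_le_sum_sq_div (fun i => (hr i).1) (fun i => (hr i).2) _ hcentred
    hlam).trans ?_
  gcongr
  exact (sum_le_sum fun i _ => hκ i).trans_eq (by simp)

theorem neg_log_le_or_neg_log_le {r q₀ q₁ : ι → Z → ℝ} (hr : ∀ i, IsPMF (r i))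
    (hq₀ : ∀ i x, 0 ≤ q₀ i x) (hq₁ : ∀ i x, 0 ≤ q₁ i x)
    (hrq₀ : ∀ i x, r i x ≠ 0 → q₀ i x ≠ 0) (hrq₁ : ∀ i x, r i x ≠ 0 → q₁ i x ≠ 0)
    {κ₀ κ₁ lam : ℝ} (hκ₀ : ∀ i, KLvar (r i) (q₀ i) ≤ κ₀)
    (hκ₁ : ∀ i, KLvar (r i) (q₁ i) ≤ κ₁) (hlam : 0 < lam)
    (hκ : 2 * Fintype.card ι * (κ₀ + κ₁) ≤ lam ^ 2)
    {D₀ D₁ : Finset (ι → Z)} (hdisj : Disjoint D₀ D₁) (hcover : ∀ z, z ∈ D₀ ∨ z ∈ D₁) :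
    -log (∑ z ∈ D₁, ∏ i, q₀ i (z i)) ≤ ∑ i, KLdiv (r i) (q₀ i) + lam + log 4 ∨
      -log (∑ z ∈ D₀, ∏ i, q₁ i (z i)) ≤ ∑ i, KLdiv (r i) (q₁ i) + lam + log 4 := by
  set R : (ι → Z) → ℝ := fun z => ∏ i, r i (z i)
  have hR : ∀ z, 0 ≤ R z := fun z => prod_nonneg fun i _ => (hr i).1 (z i)
  have htypical : ∀ (q : ι → Z → ℝ) (D : Finset (ι → Z)),
      ∑ z ∈ D, R z - ∑ z ∈ univ.filter (fun z => lam ≤ centredLLR r q z), R z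
        ≤ ∑ z ∈ D.filter (fun z => centredLLR r q z < lam), R z := by
    intro q D
    rw [← sum_filter_add_sum_filter_not D (fun z => centredLLR r q z < lam)]
    have : ∑ z ∈ D.filter (fun z => ¬centredLLR r q z < lam), R z
        ≤ ∑ z ∈ univ.filter (fun z => lam ≤ centredLLR r q z), R z :=
      sum_le_sum_of_subset_of_nonneg (fun z hz => by simpa using (mem_filter.1 hz).2)
        fun z _ _ => hR z
    linarith
  have htotal : ∑ z ∈ D₀, R z + ∑ z ∈ D₁, R z = 1 := by
    classical
    rw [← sum_union hdisj, eq_univ_of_forall fun z => mem_union.2 (hcover z)]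
    exact sum_prod_eq_one fun i => (hr i).2
  have hatypical :
      Fintype.card ι * κ₀ / lam ^ 2 + Fintype.card ι * κ₁ / lam ^ 2 ≤ 1 / 2 := by
    rw [← add_div, div_le_iff₀ (by positivity)]
    linarith
  by_cases h : 1 / 4 ≤ ∑ z ∈ D₁.filter (fun z => centredLLR r q₀ z < lam), R z
  · exact .inl <| neg_log_sum_le_of_quarter_le (fun i => (hr i).1) hq₀ hrq₀
      (filter_subset _ _) (fun z hz => (mem_filter.1 hz).2) h
  · refine .inr <| neg_log_sum_le_of_quarter_le (fun i => (hr i).1) hq₁ hrq₁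
      (filter_subset _ _) (fun z hz => (mem_filter.1 hz).2) ?_
    linarith [htypical q₀ D₁, htypical q₁ D₀,
      sum_prod_filter_le_centredLLR_le hr q₀ hκ₀ hlam,
      sum_prod_filter_le_centredLLR_le hr q₁ hκ₁ hlam]

end ChangeOfMeasure

theorem le_or_le_of_forall_pos_add {a b c d : ℝ} (h : ∀ ε > 0, a ≤ b + ε ∨ c ≤ d + ε) :
    a ≤ b ∨ c ≤ d := by
  by_contra! hne
  have hmin : 0 < min (a - b) (c - d) := lt_min (sub_pos.2 hne.1) (sub_pos.2 hne.2)
  rcases h (min (a - b) (c - d) / 2) (half_pos hmin) with h | h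
  · linarith [min_le_left (a - b) (c - d)]
  · linarith [min_le_right (a - b) (c - d)]

theorem IsPMF.exists_ne_zero {α : Type*} [Fintype α] {p : α → ℝ} (hp : IsPMF p) :
    ∃ x, p x ≠ 0 := by
  by_contra! h
  simpa [h] using hp.2

theorem IsChannel.commonSupport {Z : Type*} [Fintype Z] {Q : Bool → Z → ℝ} (hQ : IsChannel Q)
    (hsupp : CommonSupport (Q false) (Q true)) (a b : Bool) : CommonSupport (Q a) (Q b) := by
  obtain ⟨x, h₀, h₁⟩ := hsupp
  obtain ⟨y, hy⟩ := (hQ a).exists_ne_zero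
  cases a <;> cases b
  exacts [⟨y, hy, hy⟩, ⟨x, h₀, h₁⟩, ⟨x, h₁, h₀⟩, ⟨y, hy, hy⟩]

theorem sum_apply_eq_card_mul_add_card_mul {ι : Type*} [Fintype ι] (f : Bool → Bool → ℝ)
    (hf : ∀ a, f a a = 0) (w₀ w₁ : ι → Bool) :
    ∑ i, f (w₀ i) (w₁ i)
      = ((univ.filter fun i => w₀ i = false ∧ w₁ i = true).card : ℝ) * f false true +
        ((univ.filter fun i => w₀ i = true ∧ w₁ i = false).card : ℝ) * f true false := by
  have hsplit : ∀ i, f (w₀ i) (w₁ i)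
      = (if w₀ i = false ∧ w₁ i = true then f false true else 0) +
        (if w₀ i = true ∧ w₁ i = false then f true false else 0) := fun i => by
    cases w₀ i <;> cases w₁ i <;> simp [hf]
  rw [sum_congr rfl fun i _ => hsplit i, sum_add_distrib, ← sum_filter, ← sum_filter,
    sum_const, sum_const, nsmul_eq_mul, nsmul_eq_mul]

section Channel

variable {ι Z : Type*} [Fintype ι] [Fintype Z] {Q : Bool → Z → ℝ}

theorem sum_KLdiv_tilted_left (hQ : IsChannel Q) (w₀ w₁ : ι → Bool) (s : ℝ) :
    ∑ i, KLdiv (tilted (Q (w₀ i)) (Q (w₁ i)) s) (Q (w₀ i))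
      = ((univ.filter fun i => w₀ i = false ∧ w₁ i = true).card : ℝ) *
          KLdiv (tilted (Q false) (Q true) s) (Q false) +
        ((univ.filter fun i => w₀ i = true ∧ w₁ i = false).card : ℝ) *
          KLdiv (tilted (Q false) (Q true) (1 - s)) (Q true) := by
  rw [sum_apply_eq_card_mul_add_card_mul (fun a b => KLdiv (tilted (Q a) (Q b) s) (Q a))
    (fun a => by simp only [tilted_self (hQ a), KLdiv_self]), tilted_comm (Q true)]

theorem sum_KLdiv_tilted_right (hQ : IsChannel Q) (w₀ w₁ : ι → Bool) (s : ℝ) :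
    ∑ i, KLdiv (tilted (Q (w₀ i)) (Q (w₁ i)) s) (Q (w₁ i))
      = ((univ.filter fun i => w₀ i = false ∧ w₁ i = true).card : ℝ) *
          KLdiv (tilted (Q false) (Q true) s) (Q true) +
        ((univ.filter fun i => w₀ i = true ∧ w₁ i = false).card : ℝ) *
          KLdiv (tilted (Q false) (Q true) (1 - s)) (Q false) := by
  rw [sum_apply_eq_card_mul_add_card_mul (fun a b => KLdiv (tilted (Q a) (Q b) s) (Q b))
    (fun a => by simp only [tilted_self (hQ a), KLdiv_self]), tilted_comm (Q true)]

end Channel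

/-- Lemma 8 of the paper. -/
theorem nbound {Z : Type*} [Fintype Z] {n : ℕ}
    (Q : Bool → Z → ℝ) (hQ : IsChannel Q)
    (hsupp : CommonSupport (Q false) (Q true))
    (pmin : ℝ) (hpmin : MinTransChan Q pmin)
    (w0 w1 : Fin n → Bool)
    (D0 D1 : Finset (Fin n → Z)) (hdisj : Disjoint D0 D1)
    (hcover : ∀ z, z ∈ D0 ∨ z ∈ D1)
    (s : ℝ) (hs : s ∈ Set.Ioo (0 : ℝ) 1) :
    (- Real.log (∑ z ∈ D1, prodDist Q w0 z) ≤
        ((Finset.univ.filter fun i : Fin n => w0 i = false ∧ w1 i = true).card : ℝ) *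
            KLdiv (tilted (Q false) (Q true) s) (Q false) +
          ((Finset.univ.filter fun i : Fin n => w0 i = true ∧ w1 i = false).card : ℝ) *
            KLdiv (tilted (Q false) (Q true) (1 - s)) (Q true) +
          Real.sqrt (2 * n) * Real.log (1 / pmin) + Real.log 4) ∨
    (- Real.log (∑ z ∈ D0, prodDist Q w1 z) ≤
        ((Finset.univ.filter fun i : Fin n => w0 i = false ∧ w1 i = true).card : ℝ) *
            KLdiv (tilted (Q false) (Q true) s) (Q true) +
          ((Finset.univ.filter fun i : Fin n => w0 i = true ∧ w1 i = false).card : ℝ) *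
            KLdiv (tilted (Q false) (Q true) (1 - s)) (Q false) +
          Real.sqrt (2 * n) * Real.log (1 / pmin) + Real.log 4) := by
  obtain ⟨hpmin, -, hQmin⟩ := hpmin
  have hrow := hQ.commonSupport hsupp
  set c := log (1 / pmin)
  have hc : 0 ≤ c := by
    obtain ⟨x, h₀, h₁⟩ := hsupp
    exact (abs_nonneg _).trans
      (abs_log_sub_log_le (hQ false) (hQ true) hpmin (hQmin false) (hQmin true) h₀ h₁)
  -- Chebyshev needs `λ > 0`, which fails when `n = 0` or `pmin = 1`; enlarging `λ` by any
  -- `ε > 0` avoids these cases.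
  refine le_or_le_of_forall_pos_add fun ε hε => ?_
  have hlam : 2 * Fintype.card (Fin n) * (s ^ 2 * c ^ 2 + (1 - s) ^ 2 * c ^ 2)
      ≤ (√(2 * n) * c + ε) ^ 2 :=
    calc 2 * Fintype.card (Fin n) * (s ^ 2 * c ^ 2 + (1 - s) ^ 2 * c ^ 2)
        = 2 * n * c ^ 2 * (s ^ 2 + (1 - s) ^ 2) := by rw [Fintype.card_fin]; ring
      _ ≤ 2 * n * c ^ 2 := mul_le_of_le_one_right (by positivity) (by nlinarith [hs.1, hs.2])
      _ = (√(2 * n) * c) ^ 2 := by rw [mul_pow, sq_sqrt (by positivity)]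
      _ ≤ (√(2 * n) * c + ε) ^ 2 := pow_le_pow_left₀ (by positivity) (by linarith) 2
  have key := neg_log_le_or_neg_log_le (r := fun i => tilted (Q (w0 i)) (Q (w1 i)) s)
    (fun i => isPMF_tilted (hQ _).1 (hQ _).1 (hrow _ _) s) (fun i => (hQ (w0 i)).1)
    (fun i => (hQ (w1 i)).1) (fun i x h h0 => h (tilted_eq_zero (.inl h0) s))
    (fun i x h h0 => h (tilted_eq_zero (.inr h0) s))
    (fun i => KLvar_tilted_left_le (hQ _) (hQ _) (hrow _ _) hpmin (hQmin _) (hQmin _) s)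
    (fun i => KLvar_tilted_right_le (hQ _) (hQ _) (hrow _ _) hpmin (hQmin _) (hQmin _) s)
    (by positivity) hlam hdisj hcover
  rw [sum_KLdiv_tilted_left hQ, sum_KLdiv_tilted_right hQ] at key
  exact key.imp (fun h => by unfold prodDist; linarith) (fun h => by unfold prodDist; linarith)

end
end

section
/- Let Q be a binary-input DMC with finite output alphabet whose conditional output distributions Q_0, Q_1 have a common support point, let p_min be its smallest nonzero transition probability, and let w⃗_0, w⃗_1, w⃗'_1 ∈ {0,1}^n. Let D_0, D_1 be any partition of the n-fold output alphabet, and define p_{e,0} = Q^n(D_1 | w⃗_0) and p_{e,1} = max( Q^n(D_0 | w⃗_1), Q^n(D_0 | w⃗'_1) ). Let n_1(w⃗) denote the number of 1s in w⃗, and suppose ℓ is a real number lying (inclusively) between n_1(w⃗_1) and n_1(w⃗'_1). Then for all s ∈ (0,1), at least one of the following holds: (a) −log p_{e,0} ≤ ℓ·D(Q_s‖Q_0) + (n−ℓ)·D(Q_{1−s}‖Q_1) + √(2n)·log(1/p_min) + log 4; (b) −log p_{e,1} ≤ ℓ·D(Q_s‖Q_1) + (n−ℓ)·D(Q_{1−s}‖Q_0)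 + √(2n)·log(1/p_min) + log 4. -/
open scoped BigOperators
open Finset

noncomputable section

set_option maxHeartbeats 1000000

namespace TBproof

variable {Z : Type*} [Fintype Z]

lemma sum_pi_prod {n : ℕ} (f : Fin n → Z → ℝ) :
    ∑ z : Fin n → Z, ∏ i, f i (z i) = ∏ i, ∑ x, f i x := by
  rw [Finset.prod_univ_sum, Fintype.piFinset_univ]

lemma sum_pi_prod_mul {n : ℕ} (V : Fin n → Z → ℝ) (hV1 : ∀ i, ∑ x, V i x = 1)
    (i₀ : Fin n) (g : Z → ℝ) :
    ∑ z : Fin n → Z, (∏ i, V i (z i)) * g (z i₀) = ∑ x, V i₀ x * g x := by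
  have h1 : ∀ z : Fin n → Z, (∏ i, V i (z i)) * g (z i₀)
      = ∏ i, (V i (z i) * if i = i₀ then g (z i) else 1) := by
    intro z
    rw [Finset.prod_mul_distrib, Finset.prod_ite_eq' Finset.univ i₀ fun i => g (z i)]
    simp
  calc ∑ z : Fin n → Z, (∏ i, V i (z i)) * g (z i₀)
      = ∑ z : Fin n → Z, ∏ i, (V i (z i) * if i = i₀ then g (z i) else 1) :=
        Finset.sum_congr rfl fun z _ => h1 z
    _ = ∏ i, ∑ x, (V i x * if i = i₀ then g x else 1) :=
        sum_pi_prod (fun i x => V i x * if i = i₀ then g x else 1)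
    _ = ∑ x, V i₀ x * g x := by
        rw [← Finset.prod_erase_mul Finset.univ _ (Finset.mem_univ i₀)]
        have h2 : ∀ i ∈ Finset.univ.erase i₀, (∑ x, V i x * if i = i₀ then g x else 1) = 1 := by
          intro i hi
          have hne := Finset.ne_of_mem_erase hi
          simp only [if_neg hne, mul_one]
          exact hV1 i
        rw [Finset.prod_congr rfl h2, Finset.prod_const_one, one_mul]
        simp

lemma sum_pi_prod_mul₂ {n : ℕ} (V : Fin n → Z → ℝ) (hV1 : ∀ i, ∑ x, V i x = 1)
    {i₀ j₀ : Fin n} (hne : i₀ ≠ j₀) (g h : Z → ℝ) :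
    ∑ z : Fin n → Z, (∏ i, V i (z i)) * (g (z i₀) * h (z j₀))
      = (∑ x, V i₀ x * g x) * (∑ x, V j₀ x * h x) := by
  have h1 : ∀ z : Fin n → Z, (∏ i, V i (z i)) * (g (z i₀) * h (z j₀))
      = ∏ i, (V i (z i) * ((if i = i₀ then g (z i) else 1) * (if i = j₀ then h (z i) else 1))) := by
    intro z
    rw [Finset.prod_mul_distrib, Finset.prod_mul_distrib,
      Finset.prod_ite_eq' Finset.univ i₀ fun i => g (z i),
      Finset.prod_ite_eq' Finset.univ j₀ fun i => h (z i)]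
    simp
  have hj : j₀ ∈ Finset.univ.erase i₀ := Finset.mem_erase.mpr ⟨hne.symm, Finset.mem_univ _⟩
  calc ∑ z : Fin n → Z, (∏ i, V i (z i)) * (g (z i₀) * h (z j₀))
      = ∑ z : Fin n → Z, ∏ i,
          (V i (z i) * ((if i = i₀ then g (z i) else 1) * (if i = j₀ then h (z i) else 1))) :=
        Finset.sum_congr rfl fun z _ => h1 z
    _ = ∏ i, ∑ x, (V i x * ((if i = i₀ then g x else 1) * (if i = j₀ then h x else 1))) :=
        sum_pi_prod (fun i x => V i x * ((if i = i₀ then g x else 1) * (if i = j₀ then h x else 1)))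
    _ = (∑ x, V i₀ x * g x) * (∑ x, V j₀ x * h x) := by
        rw [← Finset.prod_erase_mul Finset.univ _ (Finset.mem_univ i₀),
          ← Finset.prod_erase_mul _ _ hj]
        have h2 : ∀ i ∈ (Finset.univ.erase i₀).erase j₀,
            (∑ x, V i x * ((if i = i₀ then g x else 1) * (if i = j₀ then h x else 1))) = 1 := by
          intro i hi
          have hne1 := Finset.ne_of_mem_erase hi
          have hne2 := Finset.ne_of_mem_erase (Finset.mem_of_mem_erase hi)
          simp only [if_neg hne1, if_neg hne2, mul_one]
          exact hV1 i
        rw [Finset.prod_congr rfl h2, Finset.prod_const_one, one_mul]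
        have e1 : (∑ x, V j₀ x * ((if j₀ = i₀ then g x else 1) * (if j₀ = j₀ then h x else 1)))
            = ∑ x, V j₀ x * h x := by
          simp [if_neg hne.symm]
        have e2 : (∑ x, V i₀ x * ((if i₀ = i₀ then g x else 1) * (if i₀ = j₀ then h x else 1)))
            = ∑ x, V i₀ x * g x := by
          simp [if_neg hne]
        rw [e1, e2, mul_comm]

lemma var_decomp {n : ℕ} (V X : Fin n → Z → ℝ) (hV1 : ∀ i, ∑ x, V i x = 1) :
    ∑ z : Fin n → Z, (∏ i, V i (z i)) * (∑ i, (X i (z i) - ∑ x, V i x * X i x)) ^ 2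
      = ∑ i, ∑ x, V i x * (X i x - ∑ y, V i y * X i y) ^ 2 := by
  set μ : Fin n → ℝ := fun i => ∑ x, V i x * X i x with hμ
  set Y : Fin n → Z → ℝ := fun i x => X i x - μ i with hY
  have hY0 : ∀ i, ∑ x, V i x * Y i x = 0 := by
    intro i
    have : ∑ x, V i x * Y i x = (∑ x, V i x * X i x) - (∑ x, V i x) * μ i := by
      rw [Finset.sum_mul]
      rw [← Finset.sum_sub_distrib]
      exact Finset.sum_congr rfl fun x _ => by simp [hY]; ring
    rw [this, hV1 i, one_mul]
    simp [hμ]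
  have key : ∀ i j : Fin n, ∑ z : Fin n → Z, (∏ k, V k (z k)) * (Y i (z i) * Y j (z j))
      = if i = j then ∑ x, V i x * (Y i x) ^ 2 else 0 := by
    intro i j
    by_cases hij : i = j
    · subst hij
      rw [if_pos rfl]
      have : ∀ z : Fin n → Z, (∏ k, V k (z k)) * (Y i (z i) * Y i (z i))
          = (∏ k, V k (z k)) * (fun x => (Y i x) ^ 2) (z i) := by
        intro z; simp [sq]
      rw [Finset.sum_congr rfl fun z _ => this z, sum_pi_prod_mul V hV1 i (fun x => (Y i x) ^ 2)]
    · rw [if_neg hij, sum_pi_prod_mul₂ V hV1 hij (Y i) (Y j), hY0 i, zero_mul]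
  calc ∑ z : Fin n → Z, (∏ i, V i (z i)) * (∑ i, Y i (z i)) ^ 2
      = ∑ z : Fin n → Z, ∑ i, ∑ j, (∏ k, V k (z k)) * (Y i (z i) * Y j (z j)) := by
        refine Finset.sum_congr rfl fun z _ => ?_
        rw [sq, Finset.sum_mul_sum, Finset.mul_sum]
        exact Finset.sum_congr rfl fun i _ => by rw [Finset.mul_sum]
    _ = ∑ i, ∑ j, ∑ z : Fin n → Z, (∏ k, V k (z k)) * (Y i (z i) * Y j (z j)) := by
        rw [Finset.sum_comm]
        exact Finset.sum_congr rfl fun i _ => Finset.sum_comm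
    _ = ∑ i, ∑ x, V i x * (Y i x) ^ 2 := by
        refine Finset.sum_congr rfl fun i _ => ?_
        have hrw : ∑ j, ∑ z : Fin n → Z, (∏ k, V k (z k)) * (Y i (z i) * Y j (z j))
            = ∑ j, if i = j then ∑ x, V i x * (Y i x) ^ 2 else 0 :=
          Finset.sum_congr rfl fun j _ => key i j
        rw [hrw, Finset.sum_ite_eq Finset.univ i (fun _ => ∑ x, V i x * (Y i x) ^ 2)]
        simp

lemma var_le (V X L : Z → ℝ) (c d B : ℝ)
    (hV0 : ∀ x, 0 ≤ V x) (hV1 : ∑ x, V x = 1)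
    (hX : ∀ x, V x ≠ 0 → X x = c * L x + d)
    (hL : ∀ x, V x ≠ 0 → |L x| ≤ B) :
    ∑ x, V x * (X x - ∑ y, V y * X y) ^ 2 ≤ c ^ 2 * B ^ 2 := by
  set m : ℝ := ∑ y, V y * L y with hm
  have hμ : ∑ y, V y * X y = c * m + d := by
    have h1 : ∑ y, V y * X y = ∑ y, (c * (V y * L y) + d * V y) := by
      refine Finset.sum_congr rfl fun y _ => ?_
      by_cases hy : V y = 0
      · simp [hy]
      · rw [hX y hy]; ring
    rw [h1, Finset.sum_add_distrib, ← Finset.mul_sum, ← Finset.mul_sum, hV1, mul_one]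
  have h2' : ∀ x, V x * (X x - (c * m + d)) ^ 2 = c ^ 2 * (V x * (L x - m) ^ 2) := by
    intro x
    by_cases hx : V x = 0
    · simp [hx]
    · rw [hX x hx]; ring
  have h2 : ∑ x, V x * (X x - ∑ y, V y * X y) ^ 2 = c ^ 2 * ∑ x, V x * (L x - m) ^ 2 := by
    have hc : ∑ x, V x * (X x - (c * m + d)) ^ 2 = ∑ x, c ^ 2 * (V x * (L x - m) ^ 2) :=
      Finset.sum_congr rfl fun x _ => h2' x
    rw [hμ, hc, ← Finset.mul_sum]
  have h3 : ∑ x, V x * (L x - m) ^ 2 = (∑ x, V x * (L x) ^ 2) - m ^ 2 := by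
    have : ∀ x, V x * (L x - m) ^ 2 = V x * (L x) ^ 2 - 2 * m * (V x * L x) + m ^ 2 * V x :=
      fun x => by ring
    have hrw : ∑ x, V x * (L x - m) ^ 2
        = ∑ x, (V x * (L x) ^ 2 - 2 * m * (V x * L x) + m ^ 2 * V x) :=
      Finset.sum_congr rfl fun x _ => this x
    rw [hrw, Finset.sum_add_distrib, Finset.sum_sub_distrib, ← Finset.mul_sum, ← Finset.mul_sum,
      ← hm, hV1]
    ring
  have h4 : ∑ x, V x * (L x) ^ 2 ≤ B ^ 2 := by
    have : ∀ x, V x * (L x) ^ 2 ≤ V x * B ^ 2 := by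
      intro x
      by_cases hx : V x = 0
      · simp [hx]
      · exact mul_le_mul_of_nonneg_left (sq_le_sq' (abs_le.mp (hL x hx)).1 (abs_le.mp (hL x hx)).2)
          (hV0 x)
    calc ∑ x, V x * (L x) ^ 2 ≤ ∑ x, V x * B ^ 2 := Finset.sum_le_sum fun x _ => this x
      _ = B ^ 2 := by rw [← Finset.sum_mul, hV1, one_mul]
  have h5 : ∑ x, V x * (L x - m) ^ 2 ≤ B ^ 2 := by
    rw [h3]; nlinarith [sq_nonneg m]
  rw [h2]
  have h6 : 0 ≤ ∑ x, V x * (L x - m) ^ 2 :=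
    Finset.sum_nonneg fun x _ => mul_nonneg (hV0 x) (sq_nonneg _)
  nlinarith [sq_nonneg c]

lemma kldiv_nonneg (p q : Z → ℝ) (hp0 : ∀ x, 0 ≤ p x) (hp1 : ∑ x, p x = 1)
    (hq0 : ∀ x, 0 ≤ q x) (hq1 : ∑ x, q x ≤ 1)
    (hac : ∀ x, p x ≠ 0 → q x ≠ 0) : 0 ≤ KLdiv p q := by
  have key : ∀ x, p x - (if p x = 0 then 0 else q x)
      ≤ (if p x = 0 then 0 else p x * Real.log (p x / q x)) := by
    intro x
    by_cases hx : p x = 0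
    · simp [hx]
    · simp only [if_neg hx]
      have hpx : 0 < p x := (hp0 x).lt_of_ne' hx
      have hqx : 0 < q x := (hq0 x).lt_of_ne' (hac x hx)
      have h1 : Real.log (q x / p x) ≤ q x / p x - 1 :=
        Real.log_le_sub_one_of_pos (div_pos hqx hpx)
      have h2 : Real.log (p x / q x) = - Real.log (q x / p x) := by
        rw [← Real.log_inv, inv_div]
      have h3 : 1 - q x / p x ≤ Real.log (p x / q x) := by rw [h2]; linarith
      have := mul_le_mul_of_nonneg_left h3 hpx.le
      calc p x - q x = p x * (1 - q x / p x) := by field_simp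
        _ ≤ p x * Real.log (p x / q x) := this
  have h1 : ∑ x, (p x - (if p x = 0 then 0 else q x)) ≤ KLdiv p q :=
    Finset.sum_le_sum fun x _ => key x
  have h2 : ∑ x, (if p x = 0 then 0 else q x) ≤ ∑ x, q x := by
    refine Finset.sum_le_sum fun x _ => ?_
    by_cases hx : p x = 0 <;> simp [hx, hq0 x]
  rw [Finset.sum_sub_distrib, hp1] at h1
  linarith


lemma core [DecidableEq Z] {n : ℕ} (V R : Fin n → Z → ℝ)
    (hV0 : ∀ i x, 0 ≤ V i x) (hV1 : ∀ i, ∑ x, V i x = 1)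
    (hR0 : ∀ i x, 0 ≤ R i x) (hac : ∀ i x, V i x ≠ 0 → R i x ≠ 0)
    (c d : Fin n → ℝ) (L : Z → ℝ) (B cm : ℝ) (hB : 0 ≤ B) (hcm : 0 ≤ cm)
    (hX : ∀ i x, V i x ≠ 0 → Real.log (V i x / R i x) = c i * L x + d i)
    (hL : ∀ x, |L x| ≤ B)
    (hc : ∀ i, |c i| ≤ cm)
    (t : ℝ) (ht0 : 0 ≤ t) (ht : t ^ 2 = 2 * n * B ^ 2) :
    ∃ G : Finset (Fin n → Z),
      (∑ z ∈ Finset.univ \ G, ∏ i, V i (z i)) ≤ cm ^ 2 / 2 ∧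
      ∀ D : Finset (Fin n → Z),
        Real.exp (-(∑ i, KLdiv (V i) (R i) + t)) * (∑ z ∈ D ∩ G, ∏ i, V i (z i))
          ≤ ∑ z ∈ D, ∏ i, R i (z i) := by
  classical
  set X : Fin n → Z → ℝ := fun i x => if V i x = 0 then 0 else Real.log (V i x / R i x)
    with hXdef
  have hμeq : ∀ i, ∑ x, V i x * X i x = KLdiv (V i) (R i) := by
    intro i
    unfold KLdiv
    refine Finset.sum_congr rfl fun x _ => ?_
    by_cases h : V i x = 0 <;> simp [hXdef, h]
  set M : ℝ := ∑ i, KLdiv (V i) (R i) with hM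
  set G : Finset (Fin n → Z) := Finset.univ.filter (fun z => ∑ i, X i (z i) ≤ M + t) with hG
  have hMeq : M = ∑ i, ∑ x, V i x * X i x :=
    (Finset.sum_congr rfl fun i _ => (hμeq i).symm)
  -- total variance bound
  have hvar : ∀ i, ∑ x, V i x * (X i x - ∑ y, V i y * X i y) ^ 2 ≤ cm ^ 2 * B ^ 2 := by
    intro i
    have h1 := var_le (V i) (X i) L (c i) (d i) B (hV0 i) (hV1 i)
      (fun x hx => by simp only [hXdef, if_neg hx]; exact hX i x hx) (fun x _ => hL x)
    refine h1.trans ?_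
    have h2 : (c i) ^ 2 ≤ cm ^ 2 := by
      have h3 := hc i
      nlinarith [abs_nonneg (c i), sq_abs (c i)]
    nlinarith [sq_nonneg B]
  have hTot : ∑ z : Fin n → Z, (∏ i, V i (z i)) * ((∑ i, X i (z i)) - M) ^ 2
      ≤ (n : ℝ) * (cm ^ 2 * B ^ 2) := by
    have hsub : ∀ z : Fin n → Z, (∑ i, X i (z i)) - M
        = ∑ i, (X i (z i) - ∑ x, V i x * X i x) := by
      intro z
      rw [hMeq, ← Finset.sum_sub_distrib]
    have h1 : ∑ z : Fin n → Z, (∏ i, V i (z i)) * ((∑ i, X i (z i)) - M) ^ 2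
        = ∑ i, ∑ x, V i x * (X i x - ∑ y, V i y * X i y) ^ 2 := by
      rw [← var_decomp V X hV1]
      exact Finset.sum_congr rfl fun z _ => by rw [hsub z]
    rw [h1]
    calc ∑ i, ∑ x, V i x * (X i x - ∑ y, V i y * X i y) ^ 2
        ≤ ∑ _i : Fin n, cm ^ 2 * B ^ 2 := Finset.sum_le_sum fun i _ => hvar i
      _ = (n : ℝ) * (cm ^ 2 * B ^ 2) := by
          rw [Finset.sum_const, Finset.card_univ, Fintype.card_fin, nsmul_eq_mul]
  have hTotnn : 0 ≤ ∑ z : Fin n → Z, (∏ i, V i (z i)) * ((∑ i, X i (z i)) - M) ^ 2 :=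
    Finset.sum_nonneg fun z _ =>
      mul_nonneg (Finset.prod_nonneg fun i _ => hV0 i (z i)) (sq_nonneg _)
  have hcheb : (∑ z ∈ Finset.univ \ G, ∏ i, V i (z i)) * t ^ 2
      ≤ ∑ z : Fin n → Z, (∏ i, V i (z i)) * ((∑ i, X i (z i)) - M) ^ 2 := by
    rw [Finset.sum_mul]
    have step : ∀ z ∈ Finset.univ \ G,
        (∏ i, V i (z i)) * t ^ 2 ≤ (∏ i, V i (z i)) * ((∑ i, X i (z i)) - M) ^ 2 := by
      intro z hz
      have hzG : ¬ (∑ i, X i (z i) ≤ M + t) := by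
        have := (Finset.mem_sdiff.mp hz).2
        simpa [hG] using this
      push_neg at hzG
      have h1 : t ≤ (∑ i, X i (z i)) - M := by linarith
      exact mul_le_mul_of_nonneg_left (pow_le_pow_left₀ ht0 h1 2)
        (Finset.prod_nonneg fun i _ => hV0 i (z i))
    calc ∑ z ∈ Finset.univ \ G, (∏ i, V i (z i)) * t ^ 2
        ≤ ∑ z ∈ Finset.univ \ G, (∏ i, V i (z i)) * ((∑ i, X i (z i)) - M) ^ 2 :=
          Finset.sum_le_sum step
      _ ≤ ∑ z : Fin n → Z, (∏ i, V i (z i)) * ((∑ i, X i (z i)) - M) ^ 2 :=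
          Finset.sum_le_sum_of_subset_of_nonneg (Finset.sdiff_subset)
            (fun z _ _ => mul_nonneg (Finset.prod_nonneg fun i _ => hV0 i (z i)) (sq_nonneg _))
  refine ⟨G, ?_, ?_⟩
  · -- tail bound
    by_cases hnB : (n : ℝ) * B ^ 2 = 0
    · have h0 : ∑ z : Fin n → Z, (∏ i, V i (z i)) * ((∑ i, X i (z i)) - M) ^ 2 ≤ 0 := by
        have he : (n : ℝ) * (cm ^ 2 * B ^ 2) = cm ^ 2 * ((n : ℝ) * B ^ 2) := by ring
        rw [he, hnB, mul_zero] at hTot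
        exact hTot
      have hsum0 : ∑ z : Fin n → Z, (∏ i, V i (z i)) * ((∑ i, X i (z i)) - M) ^ 2 = 0 :=
        le_antisymm h0 hTotnn
      have hzero : ∀ z ∈ Finset.univ \ G, (∏ i, V i (z i)) = 0 := by
        intro z hz
        have hterm := (Finset.sum_eq_zero_iff_of_nonneg
          (fun z _ => mul_nonneg (Finset.prod_nonneg fun i _ => hV0 i (z i)) (sq_nonneg _))).mp
          hsum0 z (Finset.mem_univ z)
        have hzG : ¬ (∑ i, X i (z i) ≤ M + t) := by
          have := (Finset.mem_sdiff.mp hz).2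
          simpa [hG] using this
        push_neg at hzG
        have hpos : 0 < ((∑ i, X i (z i)) - M) ^ 2 := by
          have : 0 < (∑ i, X i (z i)) - M := by linarith
          positivity
        rcases mul_eq_zero.mp hterm with h | h
        · exact h
        · exact absurd h hpos.ne'
      rw [Finset.sum_eq_zero hzero]  -- tail = 0
      positivity
    · have hnBpos : 0 < (n : ℝ) * B ^ 2 := lt_of_le_of_ne (by positivity) (Ne.symm hnB)
      have ht2pos : 0 < 2 * (n : ℝ) * B ^ 2 := by linarith
      have hch : (∑ z ∈ Finset.univ \ G, ∏ i, V i (z i)) * (2 * (n : ℝ) * B ^ 2)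
          ≤ (n : ℝ) * (cm ^ 2 * B ^ 2) := by
        rw [← ht]
        exact hcheb.trans hTot
      have he : cm ^ 2 / 2 * (2 * (n : ℝ) * B ^ 2) = (n : ℝ) * (cm ^ 2 * B ^ 2) := by ring
      have := hch.trans_eq he.symm
      exact le_of_mul_le_mul_right this ht2pos
  · -- change of measure
    intro D
    have hpt : ∀ z ∈ D ∩ G, Real.exp (-(M + t)) * ∏ i, V i (z i) ≤ ∏ i, R i (z i) := by
      intro z hz
      have hzG : z ∈ G := (Finset.mem_inter.mp hz).2
      have hle : ∑ i, X i (z i) ≤ M + t := by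
        have := Finset.mem_filter.mp hzG
        simpa [hG] using this.2
      by_cases h0 : ∃ i, V i (z i) = 0
      · rcases h0 with ⟨i, hi⟩
        rw [Finset.prod_eq_zero (Finset.mem_univ i) hi, mul_zero]
        exact Finset.prod_nonneg fun i _ => hR0 i (z i)
      · push_neg at h0
        have hVpos : ∀ i, 0 < V i (z i) := fun i => (hV0 i (z i)).lt_of_ne' (h0 i)
        have hRpos : ∀ i, 0 < R i (z i) := fun i => (hR0 i (z i)).lt_of_ne' (hac i (z i) (h0 i))
        have hRe : ∀ i : Fin n, R i (z i) = V i (z i) * Real.exp (-(X i (z i))) := by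
          intro i
          have hXi : X i (z i) = Real.log (V i (z i) / R i (z i)) := by
            simp [hXdef, h0 i]
          rw [hXi, ← Real.log_inv, inv_div, Real.exp_log (div_pos (hRpos i) (hVpos i)),
            mul_div_assoc', mul_comm, mul_div_assoc, div_self (hVpos i).ne', mul_one]
        calc Real.exp (-(M + t)) * ∏ i, V i (z i)
            ≤ Real.exp (-(∑ i, X i (z i))) * ∏ i, V i (z i) := by
              apply mul_le_mul_of_nonneg_right (Real.exp_le_exp.mpr (by linarith))
                (Finset.prod_nonneg fun i _ => hV0 i (z i))
          _ = ∏ i, (V i (z i) * Real.exp (-(X i (z i)))) := by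
              rw [Finset.prod_mul_distrib, ← Real.exp_sum]
              rw [← Finset.sum_neg_distrib]
              ring
          _ = ∏ i, R i (z i) := Finset.prod_congr rfl fun i _ => (hRe i).symm
    calc Real.exp (-(M + t)) * (∑ z ∈ D ∩ G, ∏ i, V i (z i))
        = ∑ z ∈ D ∩ G, Real.exp (-(M + t)) * ∏ i, V i (z i) := by rw [Finset.mul_sum]
      _ ≤ ∑ z ∈ D ∩ G, ∏ i, R i (z i) := Finset.sum_le_sum hpt
      _ ≤ ∑ z ∈ D, ∏ i, R i (z i) :=
          Finset.sum_le_sum_of_subset_of_nonneg (Finset.inter_subset_left)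
            (fun z _ _ => Finset.prod_nonneg fun i _ => hR0 i (z i))


lemma kl_self (p : Z → ℝ) : KLdiv p p = 0 := by
  unfold KLdiv
  apply Finset.sum_eq_zero
  intro x _
  by_cases h : p x = 0
  · rw [if_pos h]
  · rw [if_neg h, div_self h, Real.log_one, mul_zero]

lemma cherSum_pos (Q0 Q1 : Z → ℝ) (h00 : ∀ x, 0 ≤ Q0 x) (h10 : ∀ x, 0 ≤ Q1 x)
    (hsupp : ∃ x, Q0 x ≠ 0 ∧ Q1 x ≠ 0) (σ : ℝ) :
    0 < cherSum Q0 Q1 σ := by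
  obtain ⟨x0, hx0, hx1⟩ := hsupp
  unfold cherSum
  apply Finset.sum_pos'
  · intro x _
    split_ifs with h
    · exact le_refl 0
    · exact mul_nonneg (Real.rpow_nonneg (h00 x) _) (Real.rpow_nonneg (h10 x) _)
  · refine ⟨x0, Finset.mem_univ x0, ?_⟩
    rw [if_neg (by push_neg; exact ⟨hx0, hx1⟩)]
    exact mul_pos (Real.rpow_pos_of_pos ((h00 x0).lt_of_ne' hx0) _)
      (Real.rpow_pos_of_pos ((h10 x0).lt_of_ne' hx1) _)

lemma tilted_nonneg (Q0 Q1 : Z → ℝ) (h00 : ∀ x, 0 ≤ Q0 x) (h10 : ∀ x, 0 ≤ Q1 x)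
    (hsupp : ∃ x, Q0 x ≠ 0 ∧ Q1 x ≠ 0) (σ : ℝ) (x : Z) :
    0 ≤ tilted Q0 Q1 σ x := by
  unfold tilted
  apply div_nonneg _ (cherSum_pos Q0 Q1 h00 h10 hsupp σ).le
  split_ifs with h
  · exact le_refl 0
  · exact mul_nonneg (Real.rpow_nonneg (h00 x) _) (Real.rpow_nonneg (h10 x) _)

lemma tilted_sum_one (Q0 Q1 : Z → ℝ) (h00 : ∀ x, 0 ≤ Q0 x) (h10 : ∀ x, 0 ≤ Q1 x)
    (hsupp : ∃ x, Q0 x ≠ 0 ∧ Q1 x ≠ 0) (σ : ℝ) :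
    ∑ x, tilted Q0 Q1 σ x = 1 := by
  unfold tilted
  rw [← Finset.sum_div]
  exact div_self (cherSum_pos Q0 Q1 h00 h10 hsupp σ).ne'

lemma tilted_ne (Q0 Q1 : Z → ℝ) (σ : ℝ) (x : Z) (h : tilted Q0 Q1 σ x ≠ 0) :
    Q0 x ≠ 0 ∧ Q1 x ≠ 0 := by
  by_contra hcon
  apply h
  unfold tilted
  rw [if_pos (by tauto), zero_div]

lemma log_tilted (Q0 Q1 : Z → ℝ) (h00 : ∀ x, 0 ≤ Q0 x) (h10 : ∀ x, 0 ≤ Q1 x)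
    (hsupp : ∃ x, Q0 x ≠ 0 ∧ Q1 x ≠ 0) (σ : ℝ) (x : Z)
    (h0 : Q0 x ≠ 0) (h1 : Q1 x ≠ 0) :
    Real.log (tilted Q0 Q1 σ x)
      = (1 - σ) * Real.log (Q0 x) + σ * Real.log (Q1 x)
        - Real.log (cherSum Q0 Q1 σ) := by
  have hp0 : 0 < Q0 x := (h00 x).lt_of_ne' h0
  have hp1 : 0 < Q1 x := (h10 x).lt_of_ne' h1
  unfold tilted
  rw [if_neg (by push_neg; exact ⟨h0, h1⟩)]
  rw [Real.log_div (mul_ne_zero (Real.rpow_pos_of_pos hp0 _).ne' (Real.rpow_pos_of_pos hp1 _).ne')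
    (cherSum_pos Q0 Q1 h00 h10 hsupp σ).ne']
  rw [Real.log_mul (Real.rpow_pos_of_pos hp0 _).ne' (Real.rpow_pos_of_pos hp1 _).ne',
    Real.log_rpow hp0, Real.log_rpow hp1]

lemma choose_w {n : ℕ} (w0 wa wb : Fin n → Bool) (l : ℝ)
    (ha : ((Finset.univ.filter fun i : Fin n => wa i = true).card : ℝ) ≤ l)
    (hb : l ≤ ((Finset.univ.filter fun i : Fin n => wb i = true).card : ℝ)) :
    ∃ w : Fin n → Bool, (w = wa ∨ w = wb) ∧
      ((Finset.univ.filter fun i : Fin n => w0 i = false ∧ w i = true).card : ℝ) ≤ l ∧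
      ((Finset.univ.filter fun i : Fin n => w0 i = true ∧ w i = false).card : ℝ)
        ≤ (n : ℝ) - l := by
  classical
  have hcardsplit : ∀ w : Fin n → Bool,
      ((Finset.univ.filter fun i : Fin n => w i = false).card : ℝ)
        + ((Finset.univ.filter fun i : Fin n => w i = true).card : ℝ) = (n : ℝ) := by
    intro w
    have h1 := Finset.card_filter_add_card_filter_not
      (s := (Finset.univ : Finset (Fin n))) (p := fun i => w i = false)
    have h2 : (Finset.univ.filter fun i : Fin n => ¬ w i = false)
        = (Finset.univ.filter fun i : Fin n => w i = true) := by
      apply Finset.ext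
      intro i
      simp
    rw [h2, Finset.card_univ, Fintype.card_fin] at h1
    exact_mod_cast congrArg (Nat.cast : ℕ → ℝ) h1
  by_cases hA : ((Finset.univ.filter fun i : Fin n => w0 i = true ∧ wa i = false).card : ℝ)
      ≤ (n : ℝ) - l
  · refine ⟨wa, Or.inl rfl, ?_, hA⟩
    have hsub : (Finset.univ.filter fun i : Fin n => w0 i = false ∧ wa i = true)
        ⊆ (Finset.univ.filter fun i : Fin n => wa i = true) := by
      intro i hi
      rcases Finset.mem_filter.mp hi with ⟨h1, h2⟩
      exact Finset.mem_filter.mpr ⟨h1, h2.2⟩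
    exact le_trans (Nat.cast_le.mpr (Finset.card_le_card hsub)) ha
  · push_neg at hA
    have hsubA : (Finset.univ.filter fun i : Fin n => w0 i = true ∧ wa i = false)
        ⊆ (Finset.univ.filter fun i : Fin n => w0 i = true) := by
      intro i hi
      rcases Finset.mem_filter.mp hi with ⟨h1, h2⟩
      exact Finset.mem_filter.mpr ⟨h1, h2.1⟩
    have h2 : ((n : ℝ) - l) < ((Finset.univ.filter fun i : Fin n => w0 i = true).card : ℝ) :=
      lt_of_lt_of_le hA (Nat.cast_le.mpr (Finset.card_le_card hsubA))
    have h3 : ∀ w : Fin n → Bool,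
        ((Finset.univ.filter fun i : Fin n => w i = false).card : ℝ)
          + ((Finset.univ.filter fun i : Fin n => w i = true).card : ℝ) = (n : ℝ) :=
      hcardsplit
    have hw0split := h3 w0
    have hzero_lt : ((Finset.univ.filter fun i : Fin n => w0 i = false).card : ℝ) < l := by
      have e : (Finset.univ.filter fun i : Fin n => w0 i = true)
          = (Finset.univ.filter fun i : Fin n => ¬ (w0 i = false)) := by
        apply Finset.ext; intro i; simp
      linarith
    refine ⟨wb, Or.inr rfl, ?_, ?_⟩
    · have hsub : (Finset.univ.filter fun i : Fin n => w0 i = false ∧ wb i = true)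
          ⊆ (Finset.univ.filter fun i : Fin n => w0 i = false) := by
        intro i hi
        rcases Finset.mem_filter.mp hi with ⟨h1, h2⟩
        exact Finset.mem_filter.mpr ⟨h1, h2.1⟩
      exact le_of_lt (lt_of_le_of_lt (Nat.cast_le.mpr (Finset.card_le_card hsub)) hzero_lt)
    · have hsub : (Finset.univ.filter fun i : Fin n => w0 i = true ∧ wb i = false)
          ⊆ (Finset.univ.filter fun i : Fin n => wb i = false) := by
        intro i hi
        rcases Finset.mem_filter.mp hi with ⟨h1, h2⟩
        exact Finset.mem_filter.mpr ⟨h1, h2.2⟩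
      have := hcardsplit wb
      have h4 : (((Finset.univ.filter fun i : Fin n => w0 i = true ∧ wb i = false).card : ℕ) : ℝ)
          ≤ (((Finset.univ.filter fun i : Fin n => wb i = false).card : ℕ) : ℝ) :=
        Nat.cast_le.mpr (Finset.card_le_card hsub)
      linarith

end TBproof


/-- Lemma 9 of the paper: a bound in terms of the worse of two
candidate relay strings `w⃗₁` and `w⃗₁'`. -/
theorem transition_bound {Z : Type*} [Fintype Z] {n : ℕ}
    (Q : Bool → Z → ℝ) (hQ : IsChannel Q)
    (hsupp : CommonSupport (Q false) (Q true))
    (pmin : ℝ) (hpmin : MinTransChan Q pmin)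
    (w0 w1 w1' : Fin n → Bool)
    (D0 D1 : Finset (Fin n → Z)) (hdisj : Disjoint D0 D1)
    (hcover : ∀ z, z ∈ D0 ∨ z ∈ D1)
    (l : ℝ)
    (hl : min ((Finset.univ.filter fun i : Fin n => w1 i = true).card : ℝ)
            ((Finset.univ.filter fun i : Fin n => w1' i = true).card : ℝ) ≤ l)
    (hl' : l ≤ max ((Finset.univ.filter fun i : Fin n => w1 i = true).card : ℝ)
            ((Finset.univ.filter fun i : Fin n => w1' i = true).card : ℝ))
    (s : ℝ) (hs : s ∈ Set.Ioo (0 : ℝ) 1) :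
    (- Real.log (∑ z ∈ D1, prodDist Q w0 z) ≤
        l * KLdiv (tilted (Q false) (Q true) s) (Q false) +
          (n - l) * KLdiv (tilted (Q false) (Q true) (1 - s)) (Q true) +
          Real.sqrt (2 * n) * Real.log (1 / pmin) + Real.log 4) ∨
    (- Real.log (max (∑ z ∈ D0, prodDist Q w1 z) (∑ z ∈ D0, prodDist Q w1' z)) ≤
        l * KLdiv (tilted (Q false) (Q true) s) (Q true) +
          (n - l) * KLdiv (tilted (Q false) (Q true) (1 - s)) (Q false) +
          Real.sqrt (2 * n) * Real.log (1 / pmin) + Real.log 4) := by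
  classical
  obtain ⟨hs0, hs1⟩ := hs
  obtain ⟨hp0, hpex, hplb⟩ := hpmin
  have hQb0 : ∀ b x, 0 ≤ Q b x := fun b => (hQ b).1
  have hQsum : ∀ b, ∑ x, Q b x = 1 := fun b => (hQ b).2
  have hQle1 : ∀ b x, Q b x ≤ 1 := by
    intro b x
    calc Q b x ≤ ∑ y, Q b y :=
          Finset.single_le_sum (fun y _ => hQb0 b y) (Finset.mem_univ x)
      _ = 1 := hQsum b
  have hpmin1 : pmin ≤ 1 := by
    obtain ⟨xm, ym, hxy⟩ := hpex
    rw [← hxy]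
    exact hQle1 xm ym
  have hsupp' : ∃ x, Q false x ≠ 0 ∧ Q true x ≠ 0 := hsupp
  set B : ℝ := Real.log (1 / pmin) with hBdef
  have hBneg : B = - Real.log pmin := by rw [hBdef, one_div, Real.log_inv]
  have hlogp : Real.log pmin ≤ 0 := Real.log_nonpos hp0.le hpmin1
  have hB0 : 0 ≤ B := by rw [hBneg]; linarith
  set L : Z → ℝ := fun x => Real.log (Q true x) - Real.log (Q false x) with hLdef
  have hlog_mem : ∀ b x, -B ≤ Real.log (Q b x) ∧ Real.log (Q b x) ≤ 0 := by
    intro b x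
    by_cases hbx : Q b x = 0
    · rw [hbx, Real.log_zero]
      exact ⟨by linarith, le_refl 0⟩
    · constructor
      · rw [hBneg, neg_neg]
        exact Real.log_le_log hp0 (hplb b x hbx)
      · exact Real.log_nonpos (hQb0 b x) (hQle1 b x)
  have hL : ∀ x, |L x| ≤ B := by
    intro x
    rw [hLdef]
    have h1 := hlog_mem true x
    have h2 := hlog_mem false x
    rw [abs_le]
    constructor <;> [skip; skip] <;> simp only [] <;> [linarith [h1.1, h2.2]; linarith [h1.2, h2.1]]
  -- choose the relay string
  obtain ⟨w, hwor, hn01, hn10⟩ : ∃ w : Fin n → Bool, (w = w1 ∨ w = w1') ∧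
      ((Finset.univ.filter fun i : Fin n => w0 i = false ∧ w i = true).card : ℝ) ≤ l ∧
      ((Finset.univ.filter fun i : Fin n => w0 i = true ∧ w i = false).card : ℝ)
        ≤ (n : ℝ) - l := by
    rcases le_total ((Finset.univ.filter fun i : Fin n => w1 i = true).card : ℝ)
        ((Finset.univ.filter fun i : Fin n => w1' i = true).card : ℝ) with hcmp | hcmp
    · rw [min_eq_left hcmp] at hl
      rw [max_eq_right hcmp] at hl'
      obtain ⟨w, h1, h2, h3⟩ := TBproof.choose_w w0 w1 w1' l hl hl'
      exact ⟨w, h1, h2, h3⟩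
    · rw [min_eq_right hcmp] at hl
      rw [max_eq_left hcmp] at hl'
      obtain ⟨w, h1, h2, h3⟩ := TBproof.choose_w w0 w1' w1 l hl hl'
      exact ⟨w, h1.symm, h2, h3⟩
  -- the interpolating product measure
  set Vv : Fin n → Z → ℝ := fun i =>
    if w0 i = w i then Q (w0 i)
    else if w i = true then tilted (Q false) (Q true) s
    else tilted (Q false) (Q true) (1 - s) with hVdef
  have hT0 : ∀ σ x, 0 ≤ tilted (Q false) (Q true) σ x :=
    fun σ x => TBproof.tilted_nonneg _ _ (hQb0 false) (hQb0 true) hsupp' σ x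
  have hT1 : ∀ σ, ∑ x, tilted (Q false) (Q true) σ x = 1 :=
    fun σ => TBproof.tilted_sum_one _ _ (hQb0 false) (hQb0 true) hsupp' σ
  have hTne : ∀ σ x, tilted (Q false) (Q true) σ x ≠ 0 → Q false x ≠ 0 ∧ Q true x ≠ 0 :=
    fun σ x h => TBproof.tilted_ne _ _ σ x h
  have hV0 : ∀ i x, 0 ≤ Vv i x := by
    intro i x
    rw [hVdef]
    dsimp only
    split_ifs
    · exact hQb0 _ x
    · exact hT0 s x
    · exact hT0 (1 - s) x
  have hV1 : ∀ i, ∑ x, Vv i x = 1 := by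
    intro i
    rw [hVdef]
    dsimp only
    split_ifs
    · exact hQsum _
    · exact hT1 s
    · exact hT1 (1 - s)
  have hacA : ∀ i x, Vv i x ≠ 0 → Q (w0 i) x ≠ 0 := by
    intro i x hx
    rw [hVdef] at hx
    dsimp only at hx
    split_ifs at hx with h1 h2
    · exact hx
    · cases hw0 : w0 i
      · exact (hTne s x hx).1
      · exact (hTne s x hx).2
    · cases hw0 : w0 i
      · exact (hTne (1 - s) x hx).1
      · exact (hTne (1 - s) x hx).2
  have hacB : ∀ i x, Vv i x ≠ 0 → Q (w i) x ≠ 0 := by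
    intro i x hx
    rw [hVdef] at hx
    dsimp only at hx
    split_ifs at hx with h1 h2
    · rw [← h1]; exact hx
    · rw [h2]; exact (hTne s x hx).2
    · have hwf : w i = false := by
        cases hwi : w i
        · rfl
        · exact absurd hwi h2
      rw [hwf]; exact (hTne (1 - s) x hx).1
  -- the coefficient functions
  set cA : Fin n → ℝ := fun i => if w0 i = w i then 0 else if w i = true then s else -s
    with hcAdef
  set cB : Fin n → ℝ := fun i => if w0 i = w i then 0 else if w i = true then s - 1 else 1 - s
    with hcBdef
  set dd : Fin n → ℝ := fun i => if w0 i = w i then 0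
    else if w i = true then -Real.log (cherSum (Q false) (Q true) s)
    else -Real.log (cherSum (Q false) (Q true) (1 - s)) with hdddef
  have hlogt : ∀ σ x, Q false x ≠ 0 → Q true x ≠ 0 →
      Real.log (tilted (Q false) (Q true) σ x)
        = (1 - σ) * Real.log (Q false x) + σ * Real.log (Q true x)
          - Real.log (cherSum (Q false) (Q true) σ) :=
    fun σ x h0 h1 => TBproof.log_tilted _ _ (hQb0 false) (hQb0 true) hsupp' σ x h0 h1
  have hXA : ∀ i x, Vv i x ≠ 0 → Real.log (Vv i x / Q (w0 i) x) = cA i * L x + dd i := by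
    intro i x hx
    by_cases hag : w0 i = w i
    · have hv : Vv i x = Q (w0 i) x := by rw [hVdef]; dsimp only; rw [if_pos hag]
      rw [hv, div_self (by rw [← hv]; exact hx), Real.log_one, hcAdef, hdddef]
      dsimp only
      rw [if_pos hag, if_pos hag]
      ring
    · cases hwi : w i
      · have hw0i : w0 i = true := by
          cases h0 : w0 i
          · exact absurd (h0.trans hwi.symm) hag
          · rfl
        have hv : Vv i x = tilted (Q false) (Q true) (1 - s) x := by
          rw [hVdef]; dsimp only; rw [if_neg hag, if_neg (by rw [hwi]; simp)]
        rw [hv] at hx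
        obtain ⟨hq0, hq1⟩ := hTne (1 - s) x hx
        rw [hv, hw0i, Real.log_div hx hq1, hlogt (1 - s) x hq0 hq1,
          hcAdef, hdddef, hLdef]
        dsimp only
        rw [if_neg hag, if_neg hag, if_neg (by rw [hwi]; simp), if_neg (by rw [hwi]; simp)]
        ring
      · have hw0i : w0 i = false := by
          cases h0 : w0 i
          · rfl
          · exact absurd (h0.trans hwi.symm) hag
        have hv : Vv i x = tilted (Q false) (Q true) s x := by
          rw [hVdef]; dsimp only; rw [if_neg hag, if_pos hwi]
        rw [hv] at hx
        obtain ⟨hq0, hq1⟩ := hTne s x hx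
        rw [hv, hw0i, Real.log_div hx hq0, hlogt s x hq0 hq1, hcAdef, hdddef, hLdef]
        dsimp only
        rw [if_neg hag, if_neg hag, if_pos hwi, if_pos hwi]
        ring
  have hXB : ∀ i x, Vv i x ≠ 0 → Real.log (Vv i x / Q (w i) x) = cB i * L x + dd i := by
    intro i x hx
    by_cases hag : w0 i = w i
    · have hv : Vv i x = Q (w i) x := by rw [hVdef]; dsimp only; rw [if_pos hag, hag]
      rw [hv, div_self (by rw [← hv]; exact hx), Real.log_one, hcBdef, hdddef]
      dsimp only
      rw [if_pos hag, if_pos hag]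
      ring
    · cases hwi : w i
      · have hv : Vv i x = tilted (Q false) (Q true) (1 - s) x := by
          rw [hVdef]; dsimp only; rw [if_neg hag, if_neg (by rw [hwi]; simp)]
        rw [hv] at hx
        obtain ⟨hq0, hq1⟩ := hTne (1 - s) x hx
        rw [hv, Real.log_div hx hq0, hlogt (1 - s) x hq0 hq1, hcBdef, hdddef, hLdef]
        dsimp only
        rw [if_neg hag, if_neg hag, if_neg (by rw [hwi]; simp), if_neg (by rw [hwi]; simp)]
        ring
      · have hv : Vv i x = tilted (Q false) (Q true) s x := by
          rw [hVdef]; dsimp only; rw [if_neg hag, if_pos hwi]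
        rw [hv] at hx
        obtain ⟨hq0, hq1⟩ := hTne s x hx
        rw [hv, Real.log_div hx hq1, hlogt s x hq0 hq1, hcBdef, hdddef, hLdef]
        dsimp only
        rw [if_neg hag, if_neg hag, if_pos hwi, if_pos hwi]
        ring
  have hcA : ∀ i, |cA i| ≤ s := by
    intro i
    rw [hcAdef]
    dsimp only
    split_ifs
    · rw [abs_zero]; exact hs0.le
    · rw [abs_of_pos hs0]
    · rw [abs_neg, abs_of_pos hs0]
  have hcB : ∀ i, |cB i| ≤ 1 - s := by
    intro i
    rw [hcBdef]
    dsimp only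
    split_ifs
    · rw [abs_zero]; linarith
    · rw [abs_of_neg (by linarith : s - 1 < 0)]; ring_nf; exact le_refl _
    · rw [abs_of_pos (by linarith : (0:ℝ) < 1 - s)]
  set t : ℝ := Real.sqrt (2 * n) * B with htdef
  have ht0 : 0 ≤ t := mul_nonneg (Real.sqrt_nonneg _) hB0
  have ht2 : t ^ 2 = 2 * n * B ^ 2 := by
    rw [htdef, mul_pow, Real.sq_sqrt (by positivity)]
  obtain ⟨Ga, hGatail, hGabnd⟩ := TBproof.core Vv (fun i => Q (w0 i)) hV0 hV1
    (fun i x => hQb0 (w0 i) x) hacA cA dd L B s hB0 hs0.le hXA hL hcA t ht0 ht2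
  obtain ⟨Gb, hGbtail, hGbbnd⟩ := TBproof.core Vv (fun i => Q (w i)) hV0 hV1
    (fun i x => hQb0 (w i) x) hacB cB dd L B (1 - s) hB0 (by linarith) hXB hL hcB t ht0 ht2
  -- dichotomy
  have hVz : ∀ z : Fin n → Z, 0 ≤ ∏ i, Vv i (z i) :=
    fun z => Finset.prod_nonneg fun i _ => hV0 i (z i)
  have hVuniv : ∑ z : Fin n → Z, ∏ i, Vv i (z i) = 1 := by
    rw [TBproof.sum_pi_prod Vv]
    exact Finset.prod_eq_one fun i _ => hV1 i
  have hunion : D0 ∪ D1 = Finset.univ :=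
    Finset.eq_univ_iff_forall.mpr fun z => Finset.mem_union.mpr (hcover z)
  have hsplit : (1 : ℝ) ≤ (∑ z ∈ D0, ∏ i, Vv i (z i)) + ∑ z ∈ D1, ∏ i, Vv i (z i) := by
    rw [← Finset.sum_union hdisj, hunion, hVuniv]
  have hpart : ∀ (D : Finset (Fin n → Z)) (G : Finset (Fin n → Z)),
      ∑ z ∈ D, ∏ i, Vv i (z i)
        ≤ (∑ z ∈ D ∩ G, ∏ i, Vv i (z i)) + ∑ z ∈ Finset.univ \ G, ∏ i, Vv i (z i) := by
    intro D G
    have hsub : D ⊆ (D ∩ G) ∪ (Finset.univ \ G) := by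
      intro z hz
      by_cases h : z ∈ G
      · exact Finset.mem_union_left _ (Finset.mem_inter.mpr ⟨hz, h⟩)
      · exact Finset.mem_union_right _ (Finset.mem_sdiff.mpr ⟨Finset.mem_univ z, h⟩)
    have hdj : Disjoint (D ∩ G) (Finset.univ \ G) :=
      Finset.disjoint_left.mpr fun z hz1 hz2 =>
        (Finset.mem_sdiff.mp hz2).2 (Finset.mem_inter.mp hz1).2
    calc ∑ z ∈ D, ∏ i, Vv i (z i)
        ≤ ∑ z ∈ (D ∩ G) ∪ (Finset.univ \ G), ∏ i, Vv i (z i) :=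
          Finset.sum_le_sum_of_subset_of_nonneg hsub fun z _ _ => hVz z
      _ = (∑ z ∈ D ∩ G, ∏ i, Vv i (z i)) + ∑ z ∈ Finset.univ \ G, ∏ i, Vv i (z i) :=
          Finset.sum_union hdj
  have hquarter : (1 : ℝ) / 4 ≤ ∑ z ∈ D1 ∩ Ga, ∏ i, Vv i (z i)
      ∨ (1 : ℝ) / 4 ≤ ∑ z ∈ D0 ∩ Gb, ∏ i, Vv i (z i) := by
    by_contra hcon
    push_neg at hcon
    have h1 := hpart D1 Ga
    have h2 := hpart D0 Gb
    nlinarith [hGatail, hGbtail, hcon.1, hcon.2, hsplit]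
  -- KL divergence nonnegativity
  have hKLnn : ∀ σ b, 0 ≤ KLdiv (tilted (Q false) (Q true) σ) (Q b) := by
    intro σ b
    apply TBproof.kldiv_nonneg _ _ (hT0 σ) (hT1 σ) (hQb0 b) (le_of_eq (hQsum b))
    intro x hx
    cases b
    · exact (hTne σ x hx).1
    · exact (hTne σ x hx).2
  -- mean bounds
  have hMaEq : ∀ i, KLdiv (Vv i) (Q (w0 i))
      = (if w0 i = false ∧ w i = true then KLdiv (tilted (Q false) (Q true) s) (Q false)
          else 0)
        + (if w0 i = true ∧ w i = false then
            KLdiv (tilted (Q false) (Q true) (1 - s)) (Q true) else 0) := by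
    intro i
    cases h0 : w0 i <;> cases h1 : w i <;>
      simp [hVdef, h0, h1, TBproof.kl_self]
  have hMbEq : ∀ i, KLdiv (Vv i) (Q (w i))
      = (if w0 i = false ∧ w i = true then KLdiv (tilted (Q false) (Q true) s) (Q true)
          else 0)
        + (if w0 i = true ∧ w i = false then
            KLdiv (tilted (Q false) (Q true) (1 - s)) (Q false) else 0) := by
    intro i
    cases h0 : w0 i <;> cases h1 : w i <;>
      simp [hVdef, h0, h1, TBproof.kl_self]
  have hsum_ite : ∀ (K1 K2 : ℝ),
      ∑ i : Fin n, ((if w0 i = false ∧ w i = true then K1 else 0)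
        + (if w0 i = true ∧ w i = false then K2 else 0))
      = ((Finset.univ.filter fun i : Fin n => w0 i = false ∧ w i = true).card : ℝ) * K1
        + ((Finset.univ.filter fun i : Fin n => w0 i = true ∧ w i = false).card : ℝ) * K2 := by
    intro K1 K2
    rw [Finset.sum_add_distrib, ← Finset.sum_filter, ← Finset.sum_filter,
      Finset.sum_const, Finset.sum_const, nsmul_eq_mul, nsmul_eq_mul]
  have hMsumA : ∑ i, KLdiv (Vv i) (Q (w0 i))
      ≤ l * KLdiv (tilted (Q false) (Q true) s) (Q false)
        + ((n : ℝ) - l) * KLdiv (tilted (Q false) (Q true) (1 - s)) (Q true) := by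
    have e1 : ∑ i, KLdiv (Vv i) (Q (w0 i))
        = ∑ i : Fin n, ((if w0 i = false ∧ w i = true then
            KLdiv (tilted (Q false) (Q true) s) (Q false) else 0)
          + (if w0 i = true ∧ w i = false then
            KLdiv (tilted (Q false) (Q true) (1 - s)) (Q true) else 0)) :=
      Finset.sum_congr rfl fun i _ => hMaEq i
    rw [e1, hsum_ite]
    have := hKLnn s false
    have := hKLnn (1 - s) true
    apply add_le_add
    · exact mul_le_mul_of_nonneg_right hn01 (hKLnn s false)
    · exact mul_le_mul_of_nonneg_right hn10 (hKLnn (1 - s) true)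
  have hMsumB : ∑ i, KLdiv (Vv i) (Q (w i))
      ≤ l * KLdiv (tilted (Q false) (Q true) s) (Q true)
        + ((n : ℝ) - l) * KLdiv (tilted (Q false) (Q true) (1 - s)) (Q false) := by
    have e1 : ∑ i, KLdiv (Vv i) (Q (w i))
        = ∑ i : Fin n, ((if w0 i = false ∧ w i = true then
            KLdiv (tilted (Q false) (Q true) s) (Q true) else 0)
          + (if w0 i = true ∧ w i = false then
            KLdiv (tilted (Q false) (Q true) (1 - s)) (Q false) else 0)) :=
      Finset.sum_congr rfl fun i _ => hMbEq i
    rw [e1, hsum_ite]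
    apply add_le_add
    · exact mul_le_mul_of_nonneg_right hn01 (hKLnn s true)
    · exact mul_le_mul_of_nonneg_right hn10 (hKLnn (1 - s) false)
  rcases hquarter with hq | hq
  · left
    have hb := hGabnd D1
    have hlb : Real.exp (-(∑ i, KLdiv (Vv i) (Q (w0 i)) + t)) * (1 / 4)
        ≤ ∑ z ∈ D1, prodDist Q w0 z := by
      calc Real.exp (-(∑ i, KLdiv (Vv i) (Q (w0 i)) + t)) * (1 / 4)
          ≤ Real.exp (-(∑ i, KLdiv (Vv i) (Q (w0 i)) + t))
              * ∑ z ∈ D1 ∩ Ga, ∏ i, Vv i (z i) :=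
            mul_le_mul_of_nonneg_left hq (Real.exp_nonneg _)
        _ ≤ ∑ z ∈ D1, ∏ i, Q (w0 i) (z i) := hb
        _ = ∑ z ∈ D1, prodDist Q w0 z := rfl
    have hpep : 0 < ∑ z ∈ D1, prodDist Q w0 z := lt_of_lt_of_le (by positivity) hlb
    have hlog : -Real.log (∑ z ∈ D1, prodDist Q w0 z)
        ≤ (∑ i, KLdiv (Vv i) (Q (w0 i))) + t + Real.log 4 := by
      have h1 := Real.log_le_log (by positivity) hlb
      rw [Real.log_mul (Real.exp_ne_zero _) (by norm_num), Real.log_exp, one_div,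
        Real.log_inv] at h1
      linarith
    calc -Real.log (∑ z ∈ D1, prodDist Q w0 z)
        ≤ (∑ i, KLdiv (Vv i) (Q (w0 i))) + t + Real.log 4 := hlog
      _ ≤ l * KLdiv (tilted (Q false) (Q true) s) (Q false)
          + ((n : ℝ) - l) * KLdiv (tilted (Q false) (Q true) (1 - s)) (Q true)
          + t + Real.log 4 := by linarith
  · right
    have hb := hGbbnd D0
    have hlb : Real.exp (-(∑ i, KLdiv (Vv i) (Q (w i)) + t)) * (1 / 4)
        ≤ ∑ z ∈ D0, prodDist Q w z := by
      calc Real.exp (-(∑ i, KLdiv (Vv i) (Q (w i)) + t)) * (1 / 4)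
          ≤ Real.exp (-(∑ i, KLdiv (Vv i) (Q (w i)) + t))
              * ∑ z ∈ D0 ∩ Gb, ∏ i, Vv i (z i) :=
            mul_le_mul_of_nonneg_left hq (Real.exp_nonneg _)
        _ ≤ ∑ z ∈ D0, ∏ i, Q (w i) (z i) := hb
        _ = ∑ z ∈ D0, prodDist Q w z := rfl
    have hpep : 0 < ∑ z ∈ D0, prodDist Q w z := lt_of_lt_of_le (by positivity) hlb
    have hlog : -Real.log (∑ z ∈ D0, prodDist Q w z)
        ≤ (∑ i, KLdiv (Vv i) (Q (w i))) + t + Real.log 4 := by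
      have h1 := Real.log_le_log (by positivity) hlb
      rw [Real.log_mul (Real.exp_ne_zero _) (by norm_num), Real.log_exp, one_div,
        Real.log_inv] at h1
      linarith
    have hpemax : ∑ z ∈ D0, prodDist Q w z
        ≤ max (∑ z ∈ D0, prodDist Q w1 z) (∑ z ∈ D0, prodDist Q w1' z) := by
      rcases hwor with h | h
      · rw [h]; exact le_max_left _ _
      · rw [h]; exact le_max_right _ _
    have hmaxlog : -Real.log (max (∑ z ∈ D0, prodDist Q w1 z) (∑ z ∈ D0, prodDist Q w1' z))
        ≤ -Real.log (∑ z ∈ D0, prodDist Q w z) :=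
      neg_le_neg (Real.log_le_log hpep hpemax)
    calc -Real.log (max (∑ z ∈ D0, prodDist Q w1 z) (∑ z ∈ D0, prodDist Q w1' z))
        ≤ -Real.log (∑ z ∈ D0, prodDist Q w z) := hmaxlog
      _ ≤ (∑ i, KLdiv (Vv i) (Q (w i))) + t + Real.log 4 := hlog
      _ ≤ l * KLdiv (tilted (Q false) (Q true) s) (Q true)
          + ((n : ℝ) - l) * KLdiv (tilted (Q false) (Q true) (1 - s)) (Q false)
          + t + Real.log 4 := by linarith


end
end
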